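/- arXiv:2603.14813 — 6 statements merged into one kernel-verified Lean document; each statement's English description precedes it below -/
import Mathlib

section
/- Let a > 0, let (Ω, μ) be a measure space, and let (ψ_j)_{j∈ℕ} be a sequence in L^∞(Ω, μ). Assume there exists a sequence of positive reals (ρ_j)_{j∈ℕ} such that ∑_{j∈ℕ} exp(−ρ_j) < ∞ and the series ∑_{j∈ℕ} ρ_j |ψ_j| converges in L^∞(Ω, μ). Then: (i) for 𝛌-almost every y = (y_j)_{j∈ℕ} ∈ ℝ^ℕ, the series ∑_{j∈ℕ} y_j ψ_j converges in L^∞(Ω, μ); and (ii) for every y ∈ [0,∞)^ℕ with only finitely many nonzero coordinates, the series ∑_{j∈ℕ} y_j ψ_j converges in L^∞(Ω, μ). -/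
open MeasureTheory Filter ProbabilityTheory

/-- `ν` is the countable product `⨂_{j∈ℕ} μ₁` on `ℝ^ℕ` (with the product σ-algebra):
a probability measure whose finite-dimensional cylinder marginals are products of `μ₁`. -/
def IsProductMeasure (μ₁ : Measure ℝ) (ν : Measure (ℕ → ℝ)) : Prop :=
  IsProbabilityMeasure ν ∧
    ∀ (J : Finset ℕ) (A : ℕ → Set ℝ), (∀ j, MeasurableSet (A j)) →
      ν {y | ∀ j ∈ J, y j ∈ A j} = ∏ j ∈ J, μ₁ (A j)

section Aux

variable {Ω : Type*} [MeasurableSpace Ω] {μ : Measure Ω}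

lemma lp_smul_nonneg {c : ℝ} (hc : 0 ≤ c) {f : Lp ℝ ⊤ μ} (hf : 0 ≤ f) :
    0 ≤ c • f := by
  rw [← Lp.coeFn_nonneg] at hf ⊢
  filter_upwards [hf, Lp.coeFn_smul c f] with x hx hsx
  rw [hsx]
  exact smul_nonneg hc hx

lemma lp_abs_smul_le {c d : ℝ} (hc : 0 ≤ c) (hcd : c ≤ d) (f : Lp ℝ ⊤ μ) :
    |c • f| ≤ d • |f| := by
  rw [← Lp.coeFn_le]
  filter_upwards [Lp.coeFn_abs (c • f), Lp.coeFn_smul c f, Lp.coeFn_smul d |f|,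
    Lp.coeFn_abs f] with x h1 h2 h3 h4
  rw [h1, h2, h3, Pi.smul_apply, Pi.smul_apply, h4, smul_eq_mul, smul_eq_mul, abs_mul,
    abs_of_nonneg hc]
  exact mul_le_mul_of_nonneg_right hcd (abs_nonneg _)

lemma lp_abs_sum_le (s : Finset ℕ) (g : ℕ → Lp ℝ ⊤ μ) :
    |∑ j ∈ s, g j| ≤ ∑ j ∈ s, |g j| := by
  induction s using Finset.cons_induction with
  | empty => simp
  | cons j s hj ih =>
      rw [Finset.sum_cons, Finset.sum_cons]
      exact (abs_add_le (g j) (∑ i ∈ s, g i)).trans (add_le_add le_rfl ih)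

/-- Main convergence lemma: if `y j ∈ [0, 2 ρ j]` for all large `j`, the series converges. -/
lemma lp_series_converges (ψ : ℕ → Lp ℝ ⊤ μ) (ρ : ℕ → ℝ) (hρ : ∀ j, 0 < ρ j)
    (hconv : ∃ S : Lp ℝ ⊤ μ,
      Tendsto (fun n => ∑ j ∈ Finset.range n, ρ j • |ψ j|) atTop (nhds S))
    (y : ℕ → ℝ) (N : ℕ) (hy : ∀ j, N ≤ j → y j ∈ Set.Icc 0 (2 * ρ j)) :
    ∃ S : Lp ℝ ⊤ μ,
      Tendsto (fun n => ∑ j ∈ Finset.range n, y j • ψ j) atTop (nhds S) := by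
  obtain ⟨S₀, hS₀⟩ := hconv
  set R : ℕ → Lp ℝ ⊤ μ := fun n => ∑ j ∈ Finset.range n, ρ j • |ψ j| with hRdef
  set F : ℕ → Lp ℝ ⊤ μ := fun n => ∑ j ∈ Finset.range n, y j • ψ j with hFdef
  have hR : CauchySeq R := hS₀.cauchySeq
  have key : ∀ m n, N ≤ m → m ≤ n → ‖F n - F m‖ ≤ 2 * ‖R n - R m‖ := by
    intro m n hNm hmn
    have hFsub : F n - F m = ∑ j ∈ Finset.Ico m n, y j • ψ j :=
      (Finset.sum_Ico_eq_sub (fun j => y j • ψ j) hmn).symm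
    have hRsub : R n - R m = ∑ j ∈ Finset.Ico m n, ρ j • |ψ j| :=
      (Finset.sum_Ico_eq_sub (fun j => ρ j • |ψ j|) hmn).symm
    have habs : |F n - F m| ≤ (2 : ℝ) • (R n - R m) := by
      rw [hFsub, hRsub, Finset.smul_sum]
      refine (lp_abs_sum_le _ _).trans (Finset.sum_le_sum fun j hje => ?_)
      have hj : N ≤ j := hNm.trans (Finset.mem_Ico.1 hje).1
      have hy' := hy j hj
      rw [smul_smul]
      exact lp_abs_smul_le hy'.1 hy'.2 _
    have hRpos : (0 : Lp ℝ ⊤ μ) ≤ (2 : ℝ) • (R n - R m) := by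
      refine lp_smul_nonneg (by norm_num) ?_
      rw [hRsub]
      exact Finset.sum_nonneg fun j _ => lp_smul_nonneg (hρ j).le (abs_nonneg _)
    have hnorm : ‖F n - F m‖ ≤ ‖(2 : ℝ) • (R n - R m)‖ := by
      refine HasSolidNorm.solid ?_
      rwa [abs_of_nonneg hRpos]
    calc ‖F n - F m‖ ≤ ‖(2 : ℝ) • (R n - R m)‖ := hnorm
      _ = 2 * ‖R n - R m‖ := by
          rw [norm_smul, Real.norm_ofNat]
  have hF : CauchySeq F := by
    rw [Metric.cauchySeq_iff']
    intro ε hε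
    obtain ⟨M, hM⟩ := Metric.cauchySeq_iff'.1 hR (ε / 8) (by positivity)
    refine ⟨max N M, fun n hn => ?_⟩
    have hNn : N ≤ max N M := le_max_left _ _
    have h1 : ‖F n - F (max N M)‖ ≤ 2 * ‖R n - R (max N M)‖ := key _ _ hNn hn
    have h2 : ‖R n - R (max N M)‖ ≤ ‖R n - R M‖ + ‖R (max N M) - R M‖ := by
      have : R n - R (max N M) = (R n - R M) - (R (max N M) - R M) := by abel
      rw [this]
      exact norm_sub_le _ _
    have h3 : ‖R n - R M‖ < ε / 8 := by
      have := hM n ((le_max_right N M).trans hn)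
      rwa [dist_eq_norm] at this
    have h4 : ‖R (max N M) - R M‖ < ε / 8 := by
      have := hM (max N M) (le_max_right N M)
      rwa [dist_eq_norm] at this
    rw [dist_eq_norm]
    linarith
  exact cauchySeq_tendsto_of_complete hF

end Aux

section Gamma

lemma gamma_Iio_zero (a : ℝ) : gammaMeasure a 1 (Set.Iio 0) = 0 := by
  rw [gammaMeasure, withDensity_apply _ measurableSet_Iio]
  exact lintegral_gammaPDF_of_nonpos le_rfl

lemma gamma_tail {a t : ℝ} (ha : 0 < a) (ht : 0 ≤ t) :
    gammaMeasure a 1 (Set.Ioi t) ≤ ENNReal.ofReal (2 ^ a * Real.exp (-(t / 2))) := by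
  have hhalf : (0 : ℝ) < 1 / 2 := by norm_num
  have hG : 0 < Real.Gamma a := Real.Gamma_pos_of_pos ha
  have hmeas2 : Measurable fun x =>
      ENNReal.ofReal (2 ^ a * Real.exp (-(t / 2))) * gammaPDF a (1 / 2) x := by
    exact (measurable_const.mul
      (ENNReal.measurable_ofReal.comp (measurable_gammaPDFReal a (1 / 2))))
  have hpt : ∀ x ∈ Set.Ioi t, gammaPDF a 1 x ≤
      ENNReal.ofReal (2 ^ a * Real.exp (-(t / 2))) * gammaPDF a (1 / 2) x := by
    intro x hx
    have hxt : t < x := hx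
    have hx0 : 0 ≤ x := ht.trans hxt.le
    rw [gammaPDF_of_nonneg hx0, gammaPDF_of_nonneg hx0,
      ← ENNReal.ofReal_mul (by positivity)]
    apply ENNReal.ofReal_le_ofReal
    have hP : 0 ≤ x ^ (a - 1) := Real.rpow_nonneg hx0 _
    have h2a : (2 : ℝ) ^ a * (1 / 2 : ℝ) ^ a = 1 := by
      rw [← Real.mul_rpow (by norm_num) (by norm_num)]
      norm_num
    have hexp : Real.exp (-(1 * x)) ≤ Real.exp (-(t / 2)) * Real.exp (-(1 / 2 * x)) := by
      rw [← Real.exp_add]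
      apply Real.exp_le_exp.2
      linarith
    have h1a : (1 : ℝ) ^ a = 1 := Real.one_rpow a
    calc (1 : ℝ) ^ a / Real.Gamma a * x ^ (a - 1) * Real.exp (-(1 * x))
        = x ^ (a - 1) / Real.Gamma a * Real.exp (-(1 * x)) := by rw [h1a]; ring
      _ ≤ x ^ (a - 1) / Real.Gamma a *
          (Real.exp (-(t / 2)) * Real.exp (-(1 / 2 * x))) := by
          exact mul_le_mul_of_nonneg_left hexp (by positivity)
      _ = (2 ^ a * (1 / 2 : ℝ) ^ a) * (x ^ (a - 1) / Real.Gamma a *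
          (Real.exp (-(t / 2)) * Real.exp (-(1 / 2 * x)))) := by rw [h2a, one_mul]
      _ = 2 ^ a * Real.exp (-(t / 2)) *
          ((1 / 2 : ℝ) ^ a / Real.Gamma a * x ^ (a - 1) * Real.exp (-(1 / 2 * x))) := by
          ring
  calc gammaMeasure a 1 (Set.Ioi t)
      = ∫⁻ x in Set.Ioi t, gammaPDF a 1 x := by
        rw [gammaMeasure, withDensity_apply _ measurableSet_Ioi]
    _ ≤ ∫⁻ x in Set.Ioi t,
        ENNReal.ofReal (2 ^ a * Real.exp (-(t / 2))) * gammaPDF a (1 / 2) x :=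
        setLIntegral_mono hmeas2 hpt
    _ ≤ ∫⁻ x, ENNReal.ofReal (2 ^ a * Real.exp (-(t / 2))) * gammaPDF a (1 / 2) x :=
        setLIntegral_le_lintegral _ _
    _ = ENNReal.ofReal (2 ^ a * Real.exp (-(t / 2))) * ∫⁻ x, gammaPDF a (1 / 2) x :=
        lintegral_const_mul _
          (ENNReal.measurable_ofReal.comp (measurable_gammaPDFReal a (1 / 2)))
    _ = ENNReal.ofReal (2 ^ a * Real.exp (-(t / 2))) := by
        rw [lintegral_gammaPDF_eq_one ha hhalf, mul_one]

end Gamma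

/-- Let `a > 0`, `(Ω, μ)` a measure space and `ψ_j ∈ L^∞(Ω, μ)`. If there is a
positive sequence `(ρ_j)` with `∑ e^{-ρ_j} < ∞` such that `∑ ρ_j |ψ_j|` converges in `L^∞`,
then (i) for `𝛌`-a.e. `y ∈ ℝ^ℕ` (with `𝛌` the product of Gamma measures `λ_a`) the series
`∑ y_j ψ_j` converges in `L^∞`, and (ii) the same holds for every `y ∈ [0,∞)^ℕ` with finitely
many nonzero coordinates. -/
theorem ae_convergence_of_lognormal_exponent_series
    (a : ℝ) (ha : 0 < a)
    (Ω : Type*) [MeasurableSpace Ω] (μ : Measure Ω)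
    (ψ : ℕ → Lp ℝ ⊤ μ)
    (ρ : ℕ → ℝ) (hρ : ∀ j, 0 < ρ j)
    (hρsum : Summable fun j => Real.exp (-ρ j))
    (hconv : ∃ S : Lp ℝ ⊤ μ,
      Tendsto (fun n => ∑ j ∈ Finset.range n, ρ j • |ψ j|) atTop (nhds S))
    (ν : Measure (ℕ → ℝ)) (hν : IsProductMeasure (ProbabilityTheory.gammaMeasure a 1) ν) :
    (∀ᵐ y ∂ν, ∃ S : Lp ℝ ⊤ μ,
      Tendsto (fun n => ∑ j ∈ Finset.range n, y j • ψ j) atTop (nhds S)) ∧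
    (∀ y : ℕ → ℝ, (∀ j, 0 ≤ y j) → {j | y j ≠ 0}.Finite →
      ∃ S : Lp ℝ ⊤ μ,
        Tendsto (fun n => ∑ j ∈ Finset.range n, y j • ψ j) atTop (nhds S)) := by
  obtain ⟨hprob, hcyl⟩ := hν
  constructor
  · -- part (i)
    set E : ℕ → Set (ℕ → ℝ) := fun j => {y | y j ∉ Set.Icc (0 : ℝ) (2 * ρ j)} with hEdef
    have hνE : ∀ j, ν (E j) ≤ ENNReal.ofReal (2 ^ a * Real.exp (-ρ j)) := by
      intro j
      have hA := hcyl {j} (fun _ => (Set.Icc (0 : ℝ) (2 * ρ j))ᶜ)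
        (fun _ => measurableSet_Icc.compl)
      have hset : {y : ℕ → ℝ | ∀ i ∈ ({j} : Finset ℕ), y i ∈ (Set.Icc (0 : ℝ) (2 * ρ j))ᶜ}
          = E j := by
        ext y; simp [hEdef]
      rw [hset, Finset.prod_singleton] at hA
      rw [hA]
      have hsub : (Set.Icc (0 : ℝ) (2 * ρ j))ᶜ ⊆ Set.Iio 0 ∪ Set.Ioi (2 * ρ j) := by
        intro x hx
        simp only [Set.mem_compl_iff, Set.mem_Icc, not_and_or, not_le] at hx
        rcases hx with h | h
        · exact Or.inl h
        · exact Or.inr h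
      calc gammaMeasure a 1 ((Set.Icc (0 : ℝ) (2 * ρ j))ᶜ)
          ≤ gammaMeasure a 1 (Set.Iio 0 ∪ Set.Ioi (2 * ρ j)) := measure_mono hsub
        _ ≤ gammaMeasure a 1 (Set.Iio 0) + gammaMeasure a 1 (Set.Ioi (2 * ρ j)) :=
            measure_union_le _ _
        _ ≤ 0 + ENNReal.ofReal (2 ^ a * Real.exp (-(2 * ρ j / 2))) := by
            gcongr
            · exact le_of_eq (gamma_Iio_zero a)
            · exact gamma_tail ha (mul_nonneg (by norm_num) (hρ j).le)
        _ = ENNReal.ofReal (2 ^ a * Real.exp (-ρ j)) := by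
            rw [zero_add]
            congr 1
            ring_nf
    have hsum : (∑' j, ν (E j)) ≠ ⊤ := by
      have hS : Summable fun j => 2 ^ a * Real.exp (-ρ j) := hρsum.mul_left _
      have hle : (∑' j, ν (E j)) ≤ ∑' j, ENNReal.ofReal (2 ^ a * Real.exp (-ρ j)) :=
        ENNReal.tsum_le_tsum hνE
      have heq : (∑' j, ENNReal.ofReal (2 ^ a * Real.exp (-ρ j)))
          = ENNReal.ofReal (∑' j, 2 ^ a * Real.exp (-ρ j)) :=
        (ENNReal.ofReal_tsum_of_nonneg (fun j => by positivity) hS).symm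
      rw [heq] at hle
      exact ne_top_of_le_ne_top ENNReal.ofReal_ne_top hle
    filter_upwards [MeasureTheory.ae_eventually_notMem hsum] with y hy
    obtain ⟨N, hN⟩ := eventually_atTop.1 hy
    refine lp_series_converges ψ ρ hρ hconv y N fun j hj => ?_
    have := hN j hj
    simpa [hEdef] using this
  · -- part (ii)
    intro y hy0 hfin
    obtain ⟨M, hM⟩ := hfin.bddAbove
    refine lp_series_converges ψ ρ hρ hconv y (M + 1) fun j hj => ?_
    have hyj : y j = 0 := by
      by_contra h
      have := hM (Set.mem_setOf.2 h)
      omega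
    rw [hyj]
    exact ⟨le_rfl, mul_nonneg (by norm_num) (hρ j).le⟩
end

section
/- Let r ∈ ℕ. There exist real polynomials q_1, …, q_{2r}, each of degree at most r and with coefficients depending only on r, such that for every real Banach space V, every 2r-times continuously differentiable function u : ℝ → V, and every y ∈ ℝ, the r-fold iterate of the Hermite operator satisfies 𝒟^r u(y) = ∑_{j=1}^{2r} q_j(y) · u^{(j)}(y). Moreover there exists a constant C_r > 0 such that |q_j(y)| ≤ C_r (1+|y|)^r for all y ∈ ℝ and all j = 1, …, 2r. -/
/-- The Hermite differential operator `(𝒟u)(y) = -u''(y) + y * u'(y)`,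
acting on functions with values in a normed space. -/
noncomputable def hermOp {V : Type*} [NormedAddCommGroup V] [NormedSpace ℝ V]
    (u : ℝ → V) : ℝ → V :=
  fun y => -(deriv (deriv u) y) + y • deriv u y

/-- One application of `d/dy` to a family of coefficient polynomials. -/
noncomputable def hermAop (q : ℕ → Polynomial ℝ) : ℕ → Polynomial ℝ :=
  fun j => (q j).derivative + q (j - 1)

/-- One application of the Hermite operator to a family of coefficient polynomials. -/
noncomputable def hermStep (q : ℕ → Polynomial ℝ) : ℕ → Polynomial ℝ :=
  fun j => Polynomial.X * hermAop q j - hermAop (hermAop q) j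

/-- Coefficients for `r = 1`. -/
noncomputable def hermQ1 : ℕ → Polynomial ℝ :=
  fun j => if j = 1 then Polynomial.X else if j = 2 then -1 else 0

lemma hermAop_zero (q : ℕ → Polynomial ℝ) (h0 : q 0 = 0) : hermAop q 0 = 0 := by
  simp [hermAop, h0]

lemma hermStep_zero (q : ℕ → Polynomial ℝ) (h0 : q 0 = 0) : hermStep q 0 = 0 := by
  simp [hermStep, hermAop_zero q h0, hermAop_zero (hermAop q) (hermAop_zero q h0)]

lemma hermAop_support (q : ℕ → Polynomial ℝ) (m : ℕ) (h : ∀ j, m < j → q j = 0) :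
    ∀ j, m + 1 < j → hermAop q j = 0 := by
  intro j hj
  have h1 : q j = 0 := h j (by omega)
  have h2 : q (j - 1) = 0 := h _ (by omega)
  simp [hermAop, h1, h2]

lemma hermStep_support (q : ℕ → Polynomial ℝ) (m : ℕ) (h : ∀ j, m < j → q j = 0) :
    ∀ j, m + 2 < j → hermStep q j = 0 := by
  intro j hj
  have h1 := hermAop_support q m h
  have h2 := hermAop_support (hermAop q) (m + 1) h1
  simp [hermStep, h1 j (by omega), h2 j (by omega)]

lemma hermAop_deg (q : ℕ → Polynomial ℝ) (d : ℕ) (h : ∀ j, (q j).natDegree ≤ d) :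
    ∀ j, (hermAop q j).natDegree ≤ d := by
  intro j
  refine le_trans (Polynomial.natDegree_add_le _ _) (max_le ?_ (h _))
  exact le_trans (Polynomial.natDegree_derivative_le _) (le_trans tsub_le_self (h _))

lemma hermStep_deg (q : ℕ → Polynomial ℝ) (d : ℕ) (h : ∀ j, (q j).natDegree ≤ d) :
    ∀ j, (hermStep q j).natDegree ≤ d + 1 := by
  intro j
  have h1 := hermAop_deg q d h
  have h2 := hermAop_deg (hermAop q) d h1
  refine le_trans (Polynomial.natDegree_sub_le _ _) (max_le ?_ (le_trans (h2 j) (by omega)))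
  refine le_trans (Polynomial.natDegree_mul_le) ?_
  have := Polynomial.natDegree_X_le (R := ℝ)
  have := h1 j
  omega

/-- Properties of the iterated coefficient families. -/
lemma hermIter_props (k : ℕ) :
    (hermStep^[k] hermQ1) 0 = 0 ∧
    (∀ j, 2 * (k + 1) < j → (hermStep^[k] hermQ1) j = 0) ∧
    (∀ j, ((hermStep^[k] hermQ1) j).natDegree ≤ k + 1) := by
  induction k with
  | zero =>
    refine ⟨by simp [hermQ1], fun j hj => ?_, fun j => ?_⟩
    · simp only [Function.iterate_zero, id_eq, hermQ1]
      rw [if_neg (by omega), if_neg (by omega)]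
    · simp only [Function.iterate_zero, id_eq, hermQ1]
      split
      · exact Polynomial.natDegree_X_le
      · split <;> simp
  | succ k ih =>
    obtain ⟨ih0, ihs, ihd⟩ := ih
    rw [Function.iterate_succ_apply']
    refine ⟨hermStep_zero _ ih0, fun j hj => ?_, fun j => ?_⟩
    · exact hermStep_support _ (2 * (k + 1)) ihs j (by omega)
    · exact hermStep_deg _ (k + 1) ihd j

section Analytic

variable {V : Type*} [NormedAddCommGroup V] [NormedSpace ℝ V]

/-- Derivative of a polynomial combination of iterated derivatives. -/
lemma deriv_hermSum {u : ℝ → V} {n : ℕ} (hu : ContDiff ℝ n u) (M : ℕ)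
    (q : ℕ → Polynomial ℝ) (h0 : q 0 = 0) (hn : ∀ j, n ≤ j → q j = 0)
    (hM : q (M - 1) = 0) (y : ℝ) :
    deriv (fun z => ∑ j ∈ Finset.range M, (q j).eval z • iteratedDeriv j u z) y
      = ∑ j ∈ Finset.range M, (hermAop q j).eval y • iteratedDeriv j u y := by
  have hdiff : ∀ j, j < n → DifferentiableAt ℝ (iteratedDeriv j u) y := fun j hj =>
    (hu.differentiable_iteratedDeriv j (by exact_mod_cast hj)) y
  have hterm : ∀ j ∈ Finset.range M,
      DifferentiableAt ℝ (fun z => (q j).eval z • iteratedDeriv j u z) y := by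
    intro j _
    by_cases hjn : j < n
    · exact ((q j).differentiableAt).smul (hdiff j hjn)
    · have hq : q j = 0 := hn j (by omega)
      have : (fun z => (q j).eval z • iteratedDeriv j u z) = fun _ => (0 : V) := by
        funext z; simp [hq]
      rw [this]; exact differentiableAt_const _
  rw [deriv_fun_sum hterm]
  have hder : ∀ j ∈ Finset.range M,
      deriv (fun z => (q j).eval z • iteratedDeriv j u z) y
        = (q j).derivative.eval y • iteratedDeriv j u y
          + (q j).eval y • iteratedDeriv (j + 1) u y := by
    intro j _
    by_cases hjn : j < n
    · rw [deriv_fun_smul ((q j).differentiableAt) (hdiff j hjn), Polynomial.deriv,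
        ← iteratedDeriv_succ]
      abel
    · have hq : q j = 0 := hn j (by omega)
      have h1 : (fun z => (q j).eval z • iteratedDeriv j u z) = fun _ => (0 : V) := by
        funext z; simp [hq]
      rw [h1]
      simp [hq]
  rw [Finset.sum_congr rfl hder, Finset.sum_add_distrib]
  have shift : ∑ j ∈ Finset.range M, (q j).eval y • iteratedDeriv (j + 1) u y
      = ∑ j ∈ Finset.range M, (q (j - 1)).eval y • iteratedDeriv j u y := by
    have h := Finset.sum_range_succ' (fun j => (q (j - 1)).eval y • iteratedDeriv j u y) M
    have h2 := Finset.sum_range_succ (fun j => (q (j - 1)).eval y • iteratedDeriv j u y) M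
    simp only [Nat.add_sub_cancel, Nat.zero_sub, h0] at h h2 ⊢
    rw [h2, hM] at h
    simpa using h.symm
  rw [shift, ← Finset.sum_add_distrib]
  refine Finset.sum_congr rfl fun j _ => ?_
  rw [hermAop, Polynomial.eval_add, add_smul]

/-- The Hermite operator applied to a polynomial combination of iterated derivatives. -/
lemma hermOp_hermSum {u : ℝ → V} {n : ℕ} (hu : ContDiff ℝ n u) (M : ℕ)
    (hMn : n + 1 ≤ M) (q : ℕ → Polynomial ℝ) (h0 : q 0 = 0)
    (hS : ∀ j, n - 1 ≤ j → q j = 0) (y : ℝ) :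
    hermOp (fun z => ∑ j ∈ Finset.range M, (q j).eval z • iteratedDeriv j u z) y
      = ∑ j ∈ Finset.range M, (hermStep q j).eval y • iteratedDeriv j u y := by
  have hn1 : ∀ j, n ≤ j → q j = 0 := fun j hj => hS j (by omega)
  have hA0 : hermAop q 0 = 0 := hermAop_zero q h0
  have hAn : ∀ j, n ≤ j → hermAop q j = 0 := by
    intro j hj
    have h1 : q j = 0 := hS j (by omega)
    have h2 : q (j - 1) = 0 := hS _ (by omega)
    simp [hermAop, h1, h2]
  have d1 : ∀ z, deriv (fun w => ∑ j ∈ Finset.range M, (q j).eval w • iteratedDeriv j u w) z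
      = ∑ j ∈ Finset.range M, (hermAop q j).eval z • iteratedDeriv j u z :=
    fun z => deriv_hermSum hu M q h0 hn1 (hn1 _ (by omega)) z
  have d1' : deriv (fun w => ∑ j ∈ Finset.range M, (q j).eval w • iteratedDeriv j u w)
      = fun z => ∑ j ∈ Finset.range M, (hermAop q j).eval z • iteratedDeriv j u z :=
    funext d1
  have d2 : deriv (deriv (fun w => ∑ j ∈ Finset.range M, (q j).eval w • iteratedDeriv j u w)) y
      = ∑ j ∈ Finset.range M, (hermAop (hermAop q) j).eval y • iteratedDeriv j u y := by
    rw [d1']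
    exact deriv_hermSum hu M (hermAop q) hA0 hAn (hAn _ (by omega)) y
  show -(deriv (deriv _) y) + y • deriv _ y = _
  rw [d2, d1, Finset.smul_sum, neg_add_eq_sub, ← Finset.sum_sub_distrib]
  refine Finset.sum_congr rfl fun j _ => ?_
  rw [smul_smul, hermStep, Polynomial.eval_sub, Polynomial.eval_mul, Polynomial.eval_X,
    sub_smul]

/-- The main representation, by induction. -/
lemma hermIter_rep (r : ℕ) (hr : 0 < r) {u : ℝ → V}
    (hu : ContDiff ℝ (((2 * r : ℕ) : ℕ∞)) u) :
    ∀ k, 1 ≤ k → k ≤ r → ∀ y, hermOp^[k] u y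
      = ∑ j ∈ Finset.range (2 * r + 1),
          ((hermStep^[k - 1] hermQ1) j).eval y • iteratedDeriv j u y := by
  intro k
  induction k with
  | zero => omega
  | succ k ih =>
    intro _ hkr y
    rcases Nat.eq_zero_or_pos k with hk0 | hk1
    · subst hk0
      simp only [Nat.sub_self, Function.iterate_zero, id_eq, Function.iterate_one]
      have hsubset : ({1, 2} : Finset ℕ) ⊆ Finset.range (2 * r + 1) := by
        intro x hx
        simp only [Finset.mem_insert, Finset.mem_singleton] at hx
        rcases hx with h | h <;> simp [h] <;> omega
      have hzero : ∀ x ∈ Finset.range (2 * r + 1), x ∉ ({1, 2} : Finset ℕ) →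
          (hermQ1 x).eval y • iteratedDeriv x u y = 0 := by
        intro x _ hx
        simp only [Finset.mem_insert, Finset.mem_singleton, not_or] at hx
        have : hermQ1 x = 0 := by
          simp only [hermQ1]; rw [if_neg hx.1, if_neg hx.2]
        simp [this]
      rw [← Finset.sum_subset hsubset hzero,
        Finset.sum_pair (by norm_num : (1 : ℕ) ≠ 2)]
      have h2 : iteratedDeriv 2 u = deriv (deriv u) := by
        rw [show (2 : ℕ) = 1 + 1 from rfl, iteratedDeriv_succ, iteratedDeriv_one]
      have h1 : iteratedDeriv 1 u = deriv u := iteratedDeriv_one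
      show -(deriv (deriv u) y) + y • deriv u y = _
      simp [hermQ1, h1, h2]
      abel
    · obtain ⟨ih0, ihs, _⟩ := hermIter_props (k - 1)
      have hrep := ih hk1 (by omega)
      have hrep' : hermOp^[k] u = fun z => ∑ j ∈ Finset.range (2 * r + 1),
          ((hermStep^[k - 1] hermQ1) j).eval z • iteratedDeriv j u z := funext hrep
      rw [Function.iterate_succ_apply', hrep',
        show k + 1 - 1 = (k - 1) + 1 by omega, Function.iterate_succ_apply']
      refine hermOp_hermSum (n := 2 * r) hu (2 * r + 1) (by omega) _ ih0 ?_ y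
      intro j hj
      refine ihs j ?_
      have : 2 * ((k - 1) + 1) = 2 * k := by omega
      omega

end Analytic

lemma hermPoly_eval_bound (p : Polynomial ℝ) (r : ℕ) (hp : p.natDegree ≤ r) (y : ℝ) :
    |p.eval y| ≤ (∑ i ∈ Finset.range (r + 1), |p.coeff i|) * (1 + |y|) ^ r := by
  rw [Polynomial.eval_eq_sum_range' (lt_of_le_of_lt hp (Nat.lt_succ_self r))]
  refine le_trans (Finset.abs_sum_le_sum_abs _ _) ?_
  rw [Finset.sum_mul]
  refine Finset.sum_le_sum fun i hi => ?_
  rw [abs_mul, abs_pow]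
  refine mul_le_mul_of_nonneg_left ?_ (abs_nonneg _)
  calc |y| ^ i ≤ (1 + |y|) ^ i := by
        exact pow_le_pow_left₀ (abs_nonneg _) (by linarith [abs_nonneg y]) i
    _ ≤ (1 + |y|) ^ r := by
        exact pow_le_pow_right₀ (by linarith [abs_nonneg y])
          (by have := Finset.mem_range.1 hi; omega)

/-- For `r ∈ ℕ`, there exist real polynomials `q_1, …, q_{2r}` of degree at
most `r` (depending only on `r`) such that for every real Banach space `V` and every
`2r`-times continuously differentiable `u : ℝ → V`,
`𝒟^r u(y) = ∑_{j=1}^{2r} q_j(y) • u^{(j)}(y)` for all `y ∈ ℝ`; moreover there is `C_r > 0`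
with `|q_j(y)| ≤ C_r (1+|y|)^r` for all `y ∈ ℝ` and all `j = 1, …, 2r`. -/
theorem hermite_operator_iterate_eq_poly_combination_of_derivs (r : ℕ) (hr : 0 < r) :
    ∃ q : ℕ → Polynomial ℝ,
      (∀ j ∈ Finset.Icc 1 (2 * r), (q j).natDegree ≤ r) ∧
      (∀ (V : Type*) [NormedAddCommGroup V] [NormedSpace ℝ V] [CompleteSpace V],
        ∀ u : ℝ → V, ContDiff ℝ (2 * r) u →
          ∀ y : ℝ,
            hermOp^[r] u y = ∑ j ∈ Finset.Icc 1 (2 * r), (q j).eval y • iteratedDeriv j u y) ∧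
      (∃ C : ℝ, 0 < C ∧
        ∀ y : ℝ, ∀ j ∈ Finset.Icc 1 (2 * r), |(q j).eval y| ≤ C * (1 + |y|) ^ r) := by
  refine ⟨hermStep^[r - 1] hermQ1, ?_, ?_, ?_⟩
  · obtain ⟨_, _, hd⟩ := hermIter_props (r - 1)
    intro j _
    have := hd j
    omega
  · intro V _ _ _ u hu y
    have hu' : ContDiff ℝ (((2 * r : ℕ) : ℕ∞)) u := by exact_mod_cast hu
    obtain ⟨h0, hs, _⟩ := hermIter_props (r - 1)
    rw [hermIter_rep r hr hu' r hr le_rfl y]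
    refine (Finset.sum_subset ?_ ?_).symm
    · intro x hx
      rw [Finset.mem_Icc] at hx
      rw [Finset.mem_range]; omega
    · intro x hx hx'
      rw [Finset.mem_range] at hx
      rw [Finset.mem_Icc] at hx'
      have hx0 : x = 0 ∨ 2 * r < x := by omega
      rcases hx0 with h | h
      · subst h; simp [h0]
      · have : 2 * ((r - 1) + 1) = 2 * r := by omega
        rw [hs x (by omega)]; simp
  · obtain ⟨_, _, hd⟩ := hermIter_props (r - 1)
    refine ⟨(∑ j ∈ Finset.Icc 1 (2 * r), ∑ i ∈ Finset.range (r + 1),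
        |((hermStep^[r - 1] hermQ1) j).coeff i|) + 1, ?_, ?_⟩
    · have : (0 : ℝ) ≤ ∑ j ∈ Finset.Icc 1 (2 * r), ∑ i ∈ Finset.range (r + 1),
          |((hermStep^[r - 1] hermQ1) j).coeff i| :=
        Finset.sum_nonneg fun j _ => Finset.sum_nonneg fun i _ => abs_nonneg _
      linarith
    · intro y j hj
      have hdeg : ((hermStep^[r - 1] hermQ1) j).natDegree ≤ r := by
        have := hd j; omega
      refine le_trans (hermPoly_eval_bound _ r hdeg y) ?_
      refine mul_le_mul_of_nonneg_right ?_ (by positivity)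
      have h1 : ∑ i ∈ Finset.range (r + 1), |((hermStep^[r - 1] hermQ1) j).coeff i|
          ≤ ∑ j' ∈ Finset.Icc 1 (2 * r), ∑ i ∈ Finset.range (r + 1),
              |((hermStep^[r - 1] hermQ1) j').coeff i| :=
        Finset.single_le_sum
          (f := fun j' => ∑ i ∈ Finset.range (r + 1),
            |((hermStep^[r - 1] hermQ1) j').coeff i|)
          (fun j' _ => Finset.sum_nonneg fun i _ => abs_nonneg _) hj
      linarith
end

section
/- Let V be a real Banach space and let v : ℝ → V be twice continuously differentiable. Assume: (i) for every real polynomial q, the functions y ↦ q(y)v(y), y ↦ q(y)v'(y) and y ↦ q(y)v''(y) are Bochner integrable with respect to γ; and (ii) for every real polynomial q, e^{−y²/2} q(y) v(y) → 0 and e^{−y²/2} q(y) v'(y) → 0 as |y| → ∞. Then for every k ∈ ℕ₀, ∫_ℝ (−v''(y) + y v'(y)) · H_k(y) dγ(y) = k · ∫_ℝ v(y) · H_k(y) dγ(y), where both sides are Bochner integrals in V. -/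
open MeasureTheory Filter ProbabilityTheory Polynomial
open scoped NNReal ENNReal

noncomputable section HermiteAux

/-- The density of the standard Gaussian measure. -/
def gaussφ (y : ℝ) : ℝ := (Real.sqrt (2 * Real.pi))⁻¹ * Real.exp (-(y ^ 2) / 2)

lemma gaussφ_eq : gaussianPDFReal 0 1 = gaussφ := by
  funext y
  simp [gaussianPDFReal, gaussφ]

lemma gaussφ_nonneg (y : ℝ) : 0 ≤ gaussφ y :=
  mul_nonneg (inv_nonneg.2 (Real.sqrt_nonneg _)) (Real.exp_nonneg _)

lemma measurable_gaussφ : Measurable gaussφ := by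
  rw [← gaussφ_eq]; exact ProbabilityTheory.measurable_gaussianPDFReal 0 1

lemma hasDerivAt_gaussφ (y : ℝ) : HasDerivAt gaussφ (-y * gaussφ y) y := by
  have h1 : HasDerivAt (fun y : ℝ => -(y ^ 2) / 2) (-y) y := by
    have := ((hasDerivAt_pow 2 y).neg).div_const 2
    refine this.congr_deriv ?_
    simp; ring
  have h2 := h1.exp
  have h3 := h2.const_mul (Real.sqrt (2 * Real.pi))⁻¹
  refine h3.congr_deriv ?_
  unfold gaussφ; ring

variable {V : Type*} [NormedAddCommGroup V] [NormedSpace ℝ V]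

lemma integral_gaussianReal_eq (g : ℝ → V) :
    ∫ y, g y ∂(gaussianReal 0 1) = ∫ y, gaussφ y • g y := by
  rw [gaussianReal_of_var_ne_zero 0 one_ne_zero]
  have hd : gaussianPDF 0 1 = fun y => ((Real.toNNReal (gaussφ y) : ℝ≥0) : ℝ≥0∞) := by
    funext y
    rw [gaussianPDF_def, gaussφ_eq]
    rfl
  rw [hd, integral_withDensity_eq_integral_smul (measurable_gaussφ.real_toNNReal) g]
  congr 1
  funext y
  rw [NNReal.smul_def, Real.coe_toNNReal _ (gaussφ_nonneg y)]

lemma integrable_gaussianReal_iff (g : ℝ → V) :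
    Integrable g (gaussianReal 0 1) ↔ Integrable (fun y => gaussφ y • g y) := by
  rw [gaussianReal_of_var_ne_zero 0 one_ne_zero]
  have hd : gaussianPDF 0 1 = fun y => ((Real.toNNReal (gaussφ y) : ℝ≥0) : ℝ≥0∞) := by
    funext y
    rw [gaussianPDF_def, gaussφ_eq]
    rfl
  have hfun : (fun y => Real.toNNReal (gaussφ y) • g y) = (fun y => gaussφ y • g y) := by
    funext y
    rw [NNReal.smul_def, Real.coe_toNNReal _ (gaussφ_nonneg y)]
  rw [hd]
  have h2 := integrable_withDensity_iff_integrable_smul (μ := volume) (g := g)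
    (measurable_gaussφ.real_toNNReal)
  rw [hfun] at h2
  convert h2 using 2

/-- Integration by parts against the standard Gaussian measure. -/
lemma gaussian_ibp [CompleteSpace V] (f f' : ℝ → V)
    (hd : ∀ y, HasDerivAt f (f' y) y)
    (h1 : ∀ q : Polynomial ℝ, Integrable (fun y => q.eval y • f y) (gaussianReal 0 1))
    (h2 : ∀ q : Polynomial ℝ, Integrable (fun y => q.eval y • f' y) (gaussianReal 0 1))
    (htop : ∀ q : Polynomial ℝ,
      Tendsto (fun y => (Real.exp (-(y ^ 2) / 2) * q.eval y) • f y) atTop (nhds 0))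
    (hbot : ∀ q : Polynomial ℝ,
      Tendsto (fun y => (Real.exp (-(y ^ 2) / 2) * q.eval y) • f y) atBot (nhds 0))
    (q : Polynomial ℝ) :
    ∫ y, q.eval y • f' y ∂(gaussianReal 0 1)
      = ∫ y, (y * q.eval y - q.derivative.eval y) • f y ∂(gaussianReal 0 1) := by
  set γ := gaussianReal 0 1
  set h : ℝ → V := fun y => (q.derivative.eval y - y * q.eval y) • f y + q.eval y • f' y
    with hh
  -- integrability of the pieces
  have hint1 : Integrable (fun y => (q.derivative.eval y - y * q.eval y) • f y) γ := by
    have := h1 (q.derivative - X * q)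
    simpa using this
  have hinth : Integrable h γ := hint1.add (h2 q)
  -- the total derivative
  have hF : ∀ y, HasDerivAt (fun y => (gaussφ y * q.eval y) • f y) (gaussφ y • h y) y := by
    intro y
    have := ((hasDerivAt_gaussφ y).mul (q.hasDerivAt y)).smul (hd y)
    refine this.congr_deriv ?_
    simp only [hh, Pi.mul_apply]
    module
  have hGint : Integrable (fun y => gaussφ y • h y) :=
    (integrable_gaussianReal_iff h).mp hinth
  have hfun : (fun y => (gaussφ y * q.eval y) • f y)
      = fun y => (Real.sqrt (2 * Real.pi))⁻¹ • ((Real.exp (-(y ^ 2) / 2) * q.eval y) • f y) := by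
    funext y
    rw [smul_smul]
    congr 1
    unfold gaussφ; ring
  have hFtop : Tendsto (fun y => (gaussφ y * q.eval y) • f y) atTop (nhds 0) := by
    rw [hfun]
    simpa using (htop q).const_smul (Real.sqrt (2 * Real.pi))⁻¹
  have hFbot : Tendsto (fun y => (gaussφ y * q.eval y) • f y) atBot (nhds 0) := by
    rw [hfun]
    simpa using (hbot q).const_smul (Real.sqrt (2 * Real.pi))⁻¹
  have hzero : ∫ y, gaussφ y • h y = 0 := by
    simpa using integral_of_hasDerivAt_of_tendsto hF hGint hFbot hFtop
  have hγ0 : ∫ y, h y ∂γ = 0 := by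
    rw [integral_gaussianReal_eq h]; exact hzero
  have hsum : ∫ y, (q.derivative.eval y - y * q.eval y) • f y ∂γ
      + ∫ y, q.eval y • f' y ∂γ = 0 := by
    rw [← integral_add hint1 (h2 q)]; exact hγ0
  have heq : ∫ y, q.eval y • f' y ∂γ
      = -∫ y, (q.derivative.eval y - y * q.eval y) • f y ∂γ :=
    eq_neg_of_add_eq_zero_right hsum
  rw [heq, ← integral_neg]
  congr 1
  funext y
  rw [← neg_smul]
  congr 1
  ring

lemma hermite_derivative_succ (n : ℕ) :
    derivative (hermite (n + 1)) = ((n : Polynomial ℤ) + 1) * hermite n := by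
  induction n with
  | zero => simp [hermite_succ]
  | succ n ih =>
      rw [hermite_succ (n + 1), derivative_sub, derivative_mul, derivative_X, one_mul, ih,
        derivative_mul]
      rw [hermite_succ n]
      push_cast
      simp only [derivative_add, derivative_natCast, derivative_one]
      ring

/-- The real Hermite polynomial. -/
def HR (n : ℕ) : Polynomial ℝ := (hermite n).map (algebraMap ℤ ℝ)

lemma HR_aeval (n : ℕ) (y : ℝ) : (aeval y (hermite n) : ℝ) = (HR n).eval y := by
  simp [HR, eval_map, aeval_def]

lemma HR_succ (n : ℕ) : HR (n + 1) = X * HR n - derivative (HR n) := by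
  simp [HR, hermite_succ, Polynomial.map_sub, Polynomial.map_mul, Polynomial.map_X,
    derivative_map]

lemma HR_deriv_succ (n : ℕ) : derivative (HR (n + 1)) = ((n : Polynomial ℝ) + 1) * HR n := by
  rw [HR, derivative_map, hermite_derivative_succ]
  push_cast [Polynomial.map_mul, Polynomial.map_add, Polynomial.map_natCast, Polynomial.map_one]
  rfl

lemma HR_ode (n : ℕ) :
    X * derivative (HR n) - derivative (derivative (HR n)) = (n : Polynomial ℝ) * HR n := by
  cases n with
  | zero => simp [HR]
  | succ m =>
      rw [HR_deriv_succ m, derivative_mul]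
      simp only [derivative_add, derivative_natCast, derivative_one, add_zero, zero_add,
        zero_mul]
      rw [HR_succ m]
      push_cast
      ring

end HermiteAux

/-- Let `V` be a real Banach space and `v : ℝ → V` twice continuously
differentiable (derivatives `v'`, `v''`). Assume that for every real polynomial `q` the
functions `q(y)v(y)`, `q(y)v'(y)`, `q(y)v''(y)` are Bochner integrable with respect to the
standard Gaussian measure `γ`, and `e^{-y²/2} q(y) v(y) → 0`, `e^{-y²/2} q(y) v'(y) → 0`
as `|y| → ∞`. Then for every `k ∈ ℕ₀`,
`∫ (-v''(y) + y v'(y)) H_k(y) dγ(y) = k ∫ v(y) H_k(y) dγ(y)`,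
where `H_k` is the probabilists' Hermite polynomial. -/
theorem hermite_diffop_selfadjoint_gaussian
    (V : Type*) [NormedAddCommGroup V] [NormedSpace ℝ V] [CompleteSpace V]
    (v v' v'' : ℝ → V)
    (hv' : ∀ y : ℝ, HasDerivAt v (v' y) y)
    (hv'' : ∀ y : ℝ, HasDerivAt v' (v'' y) y)
    (hcont : Continuous v'')
    (hint : ∀ q : Polynomial ℝ,
      Integrable (fun y => q.eval y • v y) (gaussianReal 0 1) ∧
      Integrable (fun y => q.eval y • v' y) (gaussianReal 0 1) ∧
      Integrable (fun y => q.eval y • v'' y) (gaussianReal 0 1))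
    (hlim_top : ∀ q : Polynomial ℝ,
      Tendsto (fun y => (Real.exp (-(y ^ 2) / 2) * q.eval y) • v y) atTop (nhds 0) ∧
      Tendsto (fun y => (Real.exp (-(y ^ 2) / 2) * q.eval y) • v' y) atTop (nhds 0))
    (hlim_bot : ∀ q : Polynomial ℝ,
      Tendsto (fun y => (Real.exp (-(y ^ 2) / 2) * q.eval y) • v y) atBot (nhds 0) ∧
      Tendsto (fun y => (Real.exp (-(y ^ 2) / 2) * q.eval y) • v' y) atBot (nhds 0)) :
    ∀ k : ℕ,
      ∫ y, (Polynomial.aeval y (Polynomial.hermite k) : ℝ) • (-(v'' y) + y • v' y)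
          ∂(gaussianReal 0 1)
        = (k : ℝ) • ∫ y, (Polynomial.aeval y (Polynomial.hermite k) : ℝ) • v y
          ∂(gaussianReal 0 1) := by
  intro k
  simp_rw [HR_aeval k]
  have h1 : (fun y : ℝ => (HR k).eval y • (-(v'' y) + y • v' y))
      = fun y => (X * HR k : Polynomial ℝ).eval y • v' y - (HR k).eval y • v'' y := by
    funext y
    simp only [Polynomial.eval_mul, Polynomial.eval_X, smul_add, smul_neg, smul_smul]
    rw [mul_comm]
    abel
  rw [h1, integral_sub (hint (X * HR k)).2.1 (hint (HR k)).2.2]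
  have hibp1 := gaussian_ibp v' v'' hv'' (fun q => (hint q).2.1) (fun q => (hint q).2.2)
    (fun q => (hlim_top q).2) (fun q => (hlim_bot q).2) (HR k)
  rw [hibp1]
  have h2 : (fun y : ℝ => (y * (HR k).eval y - ((HR k).derivative).eval y) • v' y)
      = fun y => (X * HR k - derivative (HR k) : Polynomial ℝ).eval y • v' y := by
    funext y; simp
  rw [h2, ← integral_sub (hint (X * HR k)).2.1 (hint (X * HR k - derivative (HR k))).2.1]
  have h3 : (fun y : ℝ => (X * HR k : Polynomial ℝ).eval y • v' y
        - (X * HR k - derivative (HR k) : Polynomial ℝ).eval y • v' y)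
      = fun y => ((HR k).derivative).eval y • v' y := by
    funext y
    rw [← sub_smul]
    congr 1
    simp
  rw [h3]
  have hibp2 := gaussian_ibp v v' hv' (fun q => (hint q).1) (fun q => (hint q).2.1)
    (fun q => (hlim_top q).1) (fun q => (hlim_bot q).1) (derivative (HR k))
  rw [hibp2]
  have h4 : (fun y : ℝ => (y * ((HR k).derivative).eval y
        - ((HR k).derivative.derivative).eval y) • v y)
      = fun y => (k : ℝ) • ((HR k).eval y • v y) := by
    funext y
    rw [smul_smul]
    congr 1
    have := congrArg (Polynomial.eval y) (HR_ode k)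
    simpa using this
  rw [h4, integral_smul]
end

section
/- Let a > 0, r ∈ ℕ, and let (b_j)_{j∈ℕ} be nonnegative reals with ∑_{j∈ℕ} b_j < ∞ and b₀ := sup_{j∈ℕ} b_j < 1/2. Set K² := ∫₀^∞ (1+y)^{2r} Γ(a)^{−1} y^{a−1} e^{(2b₀−1)y} dy, which is finite. Then for every finite set J ⊂ ℕ, ∫_{ℝ^ℕ} ∏_{j∈J} (1+y_j)^{2r} · exp(2 ∑_{j∈ℕ} b_j y_j) d𝛌(y) ≤ K^{2|J|} · exp( (2a/(1−2b₀)) · ∑_{j∈ℕ} b_j ), where the series ∑_j b_j y_j is interpreted as its (possibly infinite) sum in [0,∞] and the integral is taken with values in [0,∞]. -/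
open MeasureTheory Filter ProbabilityTheory ENNReal

/-- Exponential function on `[0,∞]`, with `exp ∞ = ∞`. -/
noncomputable def expENN (t : ℝ≥0∞) : ℝ≥0∞ :=
  if t = ∞ then ∞ else ENNReal.ofReal (Real.exp t.toReal)


lemma expENN_top : expENN ∞ = ∞ := if_pos rfl

lemma expENN_ne_top {t : ℝ≥0∞} (ht : t ≠ ∞) :
    expENN t = ENNReal.ofReal (Real.exp t.toReal) := if_neg ht

lemma expENN_ofReal {x : ℝ} (hx : 0 ≤ x) :
    expENN (ENNReal.ofReal x) = ENNReal.ofReal (Real.exp x) := by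
  rw [expENN_ne_top ofReal_ne_top, ENNReal.toReal_ofReal hx]

lemma one_le_expENN (t : ℝ≥0∞) : 1 ≤ expENN t := by
  rcases eq_or_ne t ∞ with h | h
  · simp [h, expENN_top]
  · rw [expENN_ne_top h]
    calc (1:ℝ≥0∞) = ENNReal.ofReal (Real.exp 0) := by simp
    _ ≤ _ := by
      exact ENNReal.ofReal_le_ofReal (Real.exp_le_exp.2 ENNReal.toReal_nonneg)

lemma expENN_ne_zero (t : ℝ≥0∞) : expENN t ≠ 0 :=
  fun h => by simpa [h] using one_le_expENN t

lemma expENN_add (s t : ℝ≥0∞) : expENN (s + t) = expENN s * expENN t := by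
  rcases eq_or_ne s ∞ with hs | hs
  · simp [hs, expENN_top, ENNReal.top_mul (expENN_ne_zero t)]
  rcases eq_or_ne t ∞ with ht | ht
  · simp [ht, expENN_top, ENNReal.mul_top (expENN_ne_zero s)]
  rw [expENN_ne_top hs, expENN_ne_top ht, expENN_ne_top (by finiteness),
    ENNReal.toReal_add hs ht, Real.exp_add,
    ENNReal.ofReal_mul (Real.exp_nonneg _)]

lemma expENN_mono : Monotone expENN := by
  intro s t hst
  rcases eq_or_ne t ∞ with ht | ht
  · simp [ht, expENN_top]
  have hs : s ≠ ∞ := fun h => ht (top_le_iff.1 (h ▸ hst))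
  rw [expENN_ne_top hs, expENN_ne_top ht]
  exact ENNReal.ofReal_le_ofReal (Real.exp_le_exp.2 (ENNReal.toReal_mono ht hst))

lemma le_expENN (t : ℝ≥0∞) : t ≤ expENN t := by
  rcases eq_or_ne t ∞ with ht | ht
  · simp [ht, expENN_top]
  · rw [expENN_ne_top ht]
    calc t = ENNReal.ofReal t.toReal := (ENNReal.ofReal_toReal ht).symm
    _ ≤ _ := ENNReal.ofReal_le_ofReal (by linarith [Real.add_one_le_exp t.toReal])

lemma expENN_iSup {s : ℕ → ℝ≥0∞} (hs : Monotone s) :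
    expENN (⨆ n, s n) = ⨆ n, expENN (s n) := by
  refine le_antisymm ?_ (iSup_le fun n => expENN_mono (le_iSup s n))
  rcases eq_or_ne (⨆ n, s n) ∞ with hT | hT
  · have : (⨆ n, s n) ≤ ⨆ n, expENN (s n) := iSup_mono fun n => le_expENN _
    rw [hT] at this
    simpa [top_le_iff.1 this, expENN_top] using le_top
  · have hfin : ∀ n, s n ≠ ∞ := fun n => ne_top_of_le_ne_top hT (le_iSup s n)
    have h1 : Tendsto s atTop (nhds (⨆ n, s n)) := tendsto_atTop_iSup hs
    have h2 : Tendsto (fun n => expENN (s n)) atTop (nhds (expENN (⨆ n, s n))) := by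
      rw [expENN_ne_top hT]
      have := (ENNReal.tendsto_toReal hT).comp h1
      have := (ENNReal.continuous_ofReal.tendsto _).comp
        ((Real.continuous_exp.tendsto _).comp this)
      refine this.congr fun n => ?_
      simp [Function.comp, expENN_ne_top (hfin n)]
    exact le_of_eq (tendsto_nhds_unique h2 (tendsto_atTop_iSup (expENN_mono.comp hs)))

lemma expENN_sum {s : Finset ℕ} {g : ℕ → ℝ≥0∞} :
    expENN (∑ j ∈ s, g j) = ∏ j ∈ s, expENN (g j) := by
  classical
  induction s using Finset.induction with
  | empty => rw [Finset.sum_empty, Finset.prod_empty, expENN_ne_top (by simp)]; simp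
  | insert _ _ his ih =>
    rw [Finset.sum_insert his, Finset.prod_insert his, expENN_add, ih]

lemma measurable_expENN : Measurable expENN := by
  unfold expENN
  exact Measurable.ite (measurableSet_singleton ∞) measurable_const
    (ENNReal.measurable_ofReal.comp (Real.measurable_exp.comp ENNReal.measurable_toReal))

section Prod
variable {μ₁ : Measure ℝ} {ν : Measure (ℕ → ℝ)} (hν : IsProductMeasure μ₁ ν)

lemma marginal_eq (hν : IsProductMeasure μ₁ ν) (j : ℕ) :
    Measure.map (fun y : ℕ → ℝ => y j) ν = μ₁ := by
  refine Measure.ext fun A hA => ?_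
  rw [Measure.map_apply (measurable_pi_apply j) hA]
  have := hν.2 {j} (fun _ => A) (fun _ => hA)
  simp at this
  exact this

lemma coord_iIndep (hν : IsProductMeasure μ₁ ν) :
    iIndepFun (fun j (y : ℕ → ℝ) => y j) ν := by
  classical
  rw [iIndepFun_iff_measure_inter_preimage_eq_mul]
  intro S sets hsets
  set A : ℕ → Set ℝ := fun j => if j ∈ S then sets j else Set.univ with hA
  have hAm : ∀ j, MeasurableSet (A j) := by
    intro j
    by_cases h : j ∈ S
    · simpa [hA, h] using hsets j h
    · simp [hA, h]
  have h1 := hν.2 S A hAm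
  have h2 : {y : ℕ → ℝ | ∀ j ∈ S, y j ∈ A j} = ⋂ i ∈ S, (fun y : ℕ → ℝ => y i) ⁻¹' sets i := by
    ext y
    simp only [Set.mem_setOf_eq, Set.mem_iInter, Set.mem_preimage]
    refine ⟨fun h i hi => by simpa [hA, hi] using h i hi, fun h j hj => by simpa [hA, hj] using h j hj⟩
  rw [h2] at h1
  rw [h1]
  refine Finset.prod_congr rfl fun j hj => ?_
  rw [← marginal_eq hν j, Measure.map_apply (measurable_pi_apply j) (hAm j)]
  simp [hA, hj]

lemma lintegral_coord (hν : IsProductMeasure μ₁ ν) (j : ℕ) {G : ℝ → ℝ≥0∞}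
    (hG : Measurable G) :
    ∫⁻ y, G (y j) ∂ν = ∫⁻ t, G t ∂μ₁ := by
  rw [← marginal_eq hν j, lintegral_map hG (measurable_pi_apply j)]

lemma lintegral_prod_coord (hν : IsProductMeasure μ₁ ν) (G : ℕ → ℝ → ℝ≥0∞)
    (hG : ∀ j, Measurable (G j)) (S : Finset ℕ) :
    ∫⁻ y, ∏ j ∈ S, G j (y j) ∂ν = ∏ j ∈ S, ∫⁻ t, G j t ∂μ₁ := by
  classical
  have hP : IsProbabilityMeasure ν := hν.1
  induction S using Finset.induction with
  | empty => simp
  | @insert i s his ih =>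
    have hX : iIndepFun (fun j (y : ℕ → ℝ) => G j (y j)) ν :=
      (coord_iIndep hν).comp G hG
    have hmeas : ∀ j, Measurable fun y : ℕ → ℝ => G j (y j) :=
      fun j => (hG j).comp (measurable_pi_apply j)
    have hindep : IndepFun (∏ j ∈ s, fun y : ℕ → ℝ => G j (y j))
        (fun y : ℕ → ℝ => G i (y i)) ν :=
      hX.indepFun_finsetProd_of_notMem hmeas his
    have hfe : (∏ j ∈ s, fun y : ℕ → ℝ => G j (y j)) = fun y : ℕ → ℝ => ∏ j ∈ s, G j (y j) :=
      funext fun y => by simp [Finset.prod_apply]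
    rw [hfe] at hindep
    have hmul := lintegral_mul_eq_lintegral_mul_lintegral_of_indepFun''
      ((Finset.measurable_prod s fun j _ => hmeas j).aemeasurable) ((hmeas i).aemeasurable)
      hindep
    simp only [Finset.prod_insert his]
    rw [lintegral_congr (fun y : ℕ → ℝ =>
        mul_comm (G i (y i)) (∏ j ∈ s, G j (y j))), hmul, ih,
      lintegral_coord hν i (hG i)]
    exact mul_comm _ _

end Prod

lemma integrableOn_rpow_mul_exp_neg {s c : ℝ} (hs : -1 < s) (hc : 0 < c) :
    MeasureTheory.IntegrableOn (fun t : ℝ => t ^ s * Real.exp (-(c * t))) (Set.Ioi 0) := by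
  have h := integrableOn_rpow_mul_exp_neg_mul_rpow (p := 1) hs one_pos hc
  refine h.congr_fun (fun t ht => ?_) measurableSet_Ioi
  simp only [Real.rpow_one]
  ring_nf

lemma lintegral_gamma_exp {a c : ℝ} (ha : 0 < a) (hc : 0 < c) :
    ∫⁻ t in Set.Ioi (0:ℝ),
        ENNReal.ofReal (t ^ (a-1) * Real.exp (-(c * t)) / Real.Gamma a)
      = ENNReal.ofReal ((1/c) ^ a) := by
  rw [← ofReal_integral_eq_lintegral_ofReal
      ((integrableOn_rpow_mul_exp_neg (by linarith) hc).div_const _) ?_]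
  · congr 1
    rw [integral_div, Real.integral_rpow_mul_exp_neg_mul_Ioi ha hc, mul_div_assoc,
      div_self (Real.Gamma_pos_of_pos ha).ne', mul_one]
  · filter_upwards [ae_restrict_mem measurableSet_Ioi] with t ht
    have h0 : (0:ℝ) ≤ t := (Set.mem_Ioi.1 ht).le
    have := Real.Gamma_pos_of_pos ha
    positivity

lemma expENN_two_mul_ofReal {x : ℝ} (hx : 0 ≤ x) :
    expENN (2 * ENNReal.ofReal x) = ENNReal.ofReal (Real.exp (2 * x)) := by
  rw [show (2:ℝ≥0∞) * ENNReal.ofReal x = ENNReal.ofReal (2 * x) by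
      rw [ENNReal.ofReal_mul (by norm_num : (0:ℝ) ≤ 2), ENNReal.ofReal_ofNat],
    expENN_ofReal (by positivity)]


/-- Let `a > 0`, `r ∈ ℕ`, and `(b_j)` nonnegative with `∑ b_j < ∞` and
`b₀ := sup_j b_j < 1/2`. With `K² := ∫₀^∞ (1+y)^{2r} Γ(a)⁻¹ y^{a-1} e^{(2b₀-1)y} dy < ∞`,
for every finite `J ⊂ ℕ`,
`∫_{ℝ^ℕ} ∏_{j∈J} (1+y_j)^{2r} exp(2 ∑_j b_j y_j) d𝛌(y)
  ≤ K^{2|J|} exp((2a/(1-2b₀)) ∑_j b_j)`,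
where `𝛌` is the product of Gamma measures `λ_a`. -/
theorem lintegral_prod_pow_mul_exp_le_gamma
    (a : ℝ) (ha : 0 < a) (r : ℕ) (hr : 0 < r)
    (b : ℕ → ℝ) (hb : ∀ j, 0 ≤ b j) (hbsum : Summable b)
    (b₀ : ℝ) (hb₀ : b₀ = ⨆ j, b j) (hb₀lt : b₀ < 1 / 2)
    (K2 : ℝ≥0∞)
    (hK2 : K2 = ∫⁻ y in Set.Ioi (0 : ℝ),
      ENNReal.ofReal ((1 + y) ^ (2 * r) * (y ^ (a - 1) / Real.Gamma a) *
        Real.exp ((2 * b₀ - 1) * y)))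
    (ν : Measure (ℕ → ℝ)) (hν : IsProductMeasure (gammaMeasure a 1) ν) :
    K2 ≠ ∞ ∧
    ∀ J : Finset ℕ,
      ∫⁻ y, (∏ j ∈ J, ENNReal.ofReal ((1 + y j) ^ (2 * r))) *
          expENN (2 * ∑' j : ℕ, ENNReal.ofReal (b j * y j)) ∂ν
        ≤ K2 ^ J.card *
          ENNReal.ofReal (Real.exp ((2 * a / (1 - 2 * b₀)) * ∑' j : ℕ, b j)) := by
  classical
  -- basic facts about b and b₀
  have hbdd : BddAbove (Set.range b) :=
    ⟨∑' j, b j, by rintro x ⟨j, rfl⟩; exact hbsum.le_tsum j fun i _ => hb i⟩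
  have hble : ∀ j, b j ≤ b₀ := fun j => hb₀ ▸ le_ciSup hbdd j
  have hb₀0 : 0 ≤ b₀ := le_trans (hb 0) (hble 0)
  have hcpos : 0 < 1 - 2 * b₀ := by linarith
  have hΓ : 0 < Real.Gamma a := Real.Gamma_pos_of_pos ha
  -- integrability of the K2 integrand
  have hFint : MeasureTheory.IntegrableOn
      (fun t : ℝ => (1 + t) ^ (2 * r) * (t ^ (a - 1) / Real.Gamma a) *
        Real.exp ((2 * b₀ - 1) * t)) (Set.Ioi 0) := by
    set n := 2 * r with hn
    have hsum : MeasureTheory.IntegrableOn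
        (fun t : ℝ => ∑ k ∈ Finset.range (n + 1),
          ((n.choose k : ℝ) / Real.Gamma a) *
            (t ^ ((a - 1) + ((n - k : ℕ) : ℝ)) * Real.exp (-((1 - 2 * b₀) * t))))
        (Set.Ioi 0) := by
      refine MeasureTheory.integrable_finset_sum _ fun k _ => ?_
      have hk : (0:ℝ) ≤ ((n - k : ℕ) : ℝ) := Nat.cast_nonneg _
      exact ((integrableOn_rpow_mul_exp_neg (by linarith) hcpos).const_mul _)
    refine hsum.congr_fun (fun t ht => ?_) measurableSet_Ioi
    have htpos : (0:ℝ) < t := ht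
    have hbin : (1 + t) ^ n = ∑ k ∈ Finset.range (n + 1), t ^ (n - k) * (n.choose k : ℝ) := by
      simpa using add_pow 1 t n
    rw [hbin, Finset.sum_mul, Finset.sum_mul]
    refine Finset.sum_congr rfl fun k _ => ?_
    rw [Real.rpow_add htpos, Real.rpow_natCast]
    have hexp : Real.exp (-((1 - 2 * b₀) * t)) = Real.exp ((2 * b₀ - 1) * t) := by
      ring_nf
    rw [hexp]
    ring
  have hFnn : 0 ≤ᵐ[volume.restrict (Set.Ioi (0:ℝ))]
      fun t : ℝ => (1 + t) ^ (2 * r) * (t ^ (a - 1) / Real.Gamma a) *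
        Real.exp ((2 * b₀ - 1) * t) := by
    filter_upwards [ae_restrict_mem measurableSet_Ioi] with t ht
    have h0 : (0:ℝ) ≤ t := (Set.mem_Ioi.1 ht).le
    positivity
  have hK2' : K2 = ENNReal.ofReal (∫ t in Set.Ioi (0:ℝ),
      (1 + t) ^ (2 * r) * (t ^ (a - 1) / Real.Gamma a) * Real.exp ((2 * b₀ - 1) * t)) := by
    rw [hK2, ← ofReal_integral_eq_lintegral_ofReal hFint hFnn]
  have hK2ne : K2 ≠ ∞ := by rw [hK2']; exact ofReal_ne_top
  refine ⟨hK2ne, fun J => ?_⟩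
  set μ₁ := gammaMeasure a 1 with hμ₁
  have hprob : IsProbabilityMeasure μ₁ := isProbabilityMeasure_gammaMeasure ha one_pos
  -- the coordinate-wise factor functions
  set G : ℕ → ℕ → ℝ → ℝ≥0∞ := fun N j t =>
    (if j ∈ J then ENNReal.ofReal ((1 + t) ^ (2 * r)) else 1) *
      (if j ∈ Finset.range N then expENN (2 * ENNReal.ofReal (b j * t)) else 1) with hG
  have hGmeas : ∀ N j, Measurable (G N j) := by
    intro N j
    refine Measurable.mul ?_ ?_ <;> split_ifs
    · exact Measurable.ennreal_ofReal ((measurable_id.const_add 1).pow_const _)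
    · exact measurable_const
    · exact measurable_expENN.comp
        ((Measurable.ennreal_ofReal (measurable_id.const_mul (b j))).const_mul 2)
    · exact measurable_const
  -- the truncated integrands
  set fN : ℕ → (ℕ → ℝ) → ℝ≥0∞ := fun N y =>
    (∏ j ∈ J, ENNReal.ofReal ((1 + y j) ^ (2 * r))) *
      expENN (2 * ∑ j ∈ Finset.range N, ENNReal.ofReal (b j * y j)) with hfN
  have hfNmeas : ∀ N, Measurable (fN N) := by
    intro N
    refine Measurable.mul ?_ ?_
    · exact Finset.measurable_prod _ fun j _ =>
        Measurable.ennreal_ofReal (((measurable_pi_apply j).const_add 1).pow_const _)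
    · exact measurable_expENN.comp
        ((Finset.measurable_sum _ fun j _ =>
          Measurable.ennreal_ofReal (by fun_prop : Measurable fun y : ℕ → ℝ => b j * y j)).const_mul 2)
  have hfNmono : Monotone fN := fun N M h y =>
    mul_le_mul_right (expENN_mono (mul_le_mul_right
      (Finset.sum_le_sum_of_subset (Finset.range_subset_range.2 h)) 2)) _
  -- pointwise identity: the integrand is the sup of the truncated ones
  have hpt : ∀ y : ℕ → ℝ,
      (∏ j ∈ J, ENNReal.ofReal ((1 + y j) ^ (2 * r))) *
        expENN (2 * ∑' j : ℕ, ENNReal.ofReal (b j * y j)) = ⨆ N, fN N y := by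
    intro y
    have h1 : (2:ℝ≥0∞) * ∑' j : ℕ, ENNReal.ofReal (b j * y j)
        = ⨆ N, 2 * ∑ j ∈ Finset.range N, ENNReal.ofReal (b j * y j) := by
      rw [ENNReal.tsum_eq_iSup_nat, ENNReal.mul_iSup]
    have hmono : Monotone fun N => (2:ℝ≥0∞) * ∑ j ∈ Finset.range N,
        ENNReal.ofReal (b j * y j) := fun N M h =>
      mul_le_mul_right (Finset.sum_le_sum_of_subset (Finset.range_subset_range.2 h)) 2
    rw [h1, expENN_iSup hmono, ENNReal.mul_iSup]
  -- each truncated integrand is a product of coordinate factors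
  have hprod : ∀ (N : ℕ) (y : ℕ → ℝ),
      fN N y = ∏ j ∈ J ∪ Finset.range N, G N j (y j) := by
    intro N y
    rw [hfN, hG]
    simp only
    rw [Finset.prod_mul_distrib, Finset.prod_ite_mem, Finset.prod_ite_mem,
      Finset.union_inter_cancel_left, Finset.union_inter_cancel_right]
    congr 1
    rw [Finset.mul_sum, expENN_sum]
  -- one-dimensional integrals
  have hIG : ∀ (N : ℕ) (j : ℕ), ∫⁻ t, G N j t ∂μ₁
      ≤ (if j ∈ J then K2 else 1) *
        ENNReal.ofReal (Real.exp (2 * a / (1 - 2 * b₀) * b j)) := by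
    have hred : ∀ H : ℝ → ℝ≥0∞, Measurable H → ∫⁻ t, H t ∂μ₁
        = ∫⁻ t in Set.Ioi (0:ℝ),
            ENNReal.ofReal (t ^ (a - 1) * Real.exp (-t) / Real.Gamma a) * H t := by
      intro H hH
      rw [hμ₁, gammaMeasure, lintegral_withDensity_eq_lintegral_mul _
        (show Measurable (gammaPDF a 1) from (measurable_gammaPDFReal a 1).ennreal_ofReal) hH,
        ← lintegral_add_compl (gammaPDF a 1 * H) (measurableSet_Iic (a := (0:ℝ)))]
      have hIic : ∫⁻ t in Set.Iic (0:ℝ), (gammaPDF a 1 * H) t = 0 := by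
        rw [← Measure.restrict_congr_set Iio_ae_eq_Iic,
          setLIntegral_congr_fun measurableSet_Iio
            (fun t (ht : t < 0) => ?_), lintegral_zero]
        show gammaPDF a 1 t * H t = (fun _ => (0:ℝ≥0∞)) t
        rw [gammaPDF_of_neg ht, zero_mul]
      rw [hIic, zero_add, Set.compl_Iic]
      refine setLIntegral_congr_fun measurableSet_Ioi (fun t ht => ?_)
      have htpos : (0:ℝ) < t := ht
      show gammaPDF a 1 t * H t = _
      rw [gammaPDF_of_nonneg htpos.le]
      congr 2
      rw [Real.one_rpow]
      ring
    intro N j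
    have hbj : b j ≤ b₀ := hble j
    have hcj : 0 < 1 - 2 * b j := by linarith
    have hEle : ∀ t : ℝ, 0 < t →
        (if j ∈ Finset.range N then expENN (2 * ENNReal.ofReal (b j * t)) else 1)
          ≤ ENNReal.ofReal (Real.exp (2 * b₀ * t)) := by
      intro t ht
      split_ifs
      · rw [expENN_two_mul_ofReal (mul_nonneg (hb j) ht.le)]
        refine ENNReal.ofReal_le_ofReal (Real.exp_le_exp.2 ?_)
        nlinarith [hble j, ht.le, hb j]
      · calc (1:ℝ≥0∞) = ENNReal.ofReal (Real.exp 0) := by simp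
          _ ≤ _ := ENNReal.ofReal_le_ofReal (Real.exp_le_exp.2 (by positivity))
    by_cases hj : j ∈ J
    · -- bound by K2
      simp only [hj, if_pos]
      refine le_trans ?_ (le_mul_of_one_le_right' ?_)
      · rw [hred _ (hGmeas N j), hK2]
        refine setLIntegral_mono (Measurable.ennreal_ofReal
          ((((measurable_id.const_add 1).pow_const _).mul
            ((measurable_id.pow_const (a-1)).div_const _)).mul
            ((measurable_id.const_mul _).exp))) fun t ht => ?_
        have htpos : (0:ℝ) < t := ht
        rw [hG]
        simp only [hj, if_pos]
        calc ENNReal.ofReal (t ^ (a - 1) * Real.exp (-t) / Real.Gamma a) *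
              (ENNReal.ofReal ((1 + t) ^ (2 * r)) *
                (if j ∈ Finset.range N then expENN (2 * ENNReal.ofReal (b j * t)) else 1))
            ≤ ENNReal.ofReal (t ^ (a - 1) * Real.exp (-t) / Real.Gamma a) *
              (ENNReal.ofReal ((1 + t) ^ (2 * r)) * ENNReal.ofReal (Real.exp (2 * b₀ * t))) :=
              mul_le_mul_right (mul_le_mul_right (hEle t htpos) _) _
          _ = ENNReal.ofReal ((1 + t) ^ (2 * r) * (t ^ (a - 1) / Real.Gamma a) *
                Real.exp ((2 * b₀ - 1) * t)) := by
              rw [← ENNReal.ofReal_mul (by positivity), ← ENNReal.ofReal_mul (by positivity)]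
              congr 1
              rw [show (2 * b₀ - 1) * t = -t + 2 * b₀ * t by ring, Real.exp_add]
              ring
      · calc (1:ℝ≥0∞) = ENNReal.ofReal (Real.exp 0) := by simp
          _ ≤ _ := ENNReal.ofReal_le_ofReal (Real.exp_le_exp.2
            (mul_nonneg (div_nonneg (by linarith) hcpos.le) (hb j)))
    · simp only [hj, if_false, one_mul]
      by_cases hjN : j ∈ Finset.range N
      · rw [hred _ (hGmeas N j)]
        have heq : ∫⁻ t in Set.Ioi (0:ℝ),
            ENNReal.ofReal (t ^ (a - 1) * Real.exp (-t) / Real.Gamma a) * G N j t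
            = ∫⁻ t in Set.Ioi (0:ℝ),
              ENNReal.ofReal (t ^ (a - 1) * Real.exp (-((1 - 2 * b j) * t)) / Real.Gamma a) := by
          refine setLIntegral_congr_fun measurableSet_Ioi (fun t ht => ?_)
          have htpos : (0:ℝ) < t := ht
          rw [hG]
          simp only [hj, if_neg, hjN, if_pos, one_mul, ite_true, not_false_iff]
          rw [expENN_two_mul_ofReal (mul_nonneg (hb j) htpos.le),
            ← ENNReal.ofReal_mul (by positivity)]
          congr 1
          rw [show -((1 - 2 * b j) * t) = -t + 2 * (b j * t) by ring, Real.exp_add]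
          ring
        rw [heq, lintegral_gamma_exp ha hcj]
        refine ENNReal.ofReal_le_ofReal ?_
        rw [Real.rpow_def_of_pos (by positivity)]
        refine Real.exp_le_exp.2 ?_
        have hlog : Real.log (1 / (1 - 2 * b j)) ≤ 2 * b j / (1 - 2 * b₀) := by
          calc Real.log (1 / (1 - 2 * b j)) ≤ 1 / (1 - 2 * b j) - 1 :=
              Real.log_le_sub_one_of_pos (by positivity)
            _ = 2 * b j / (1 - 2 * b j) := by field_simp; ring
            _ ≤ 2 * b j / (1 - 2 * b₀) := by
              apply div_le_div_of_nonneg_left (by linarith [hb j]) hcpos (by linarith)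
        calc Real.log (1 / (1 - 2 * b j)) * a ≤ 2 * b j / (1 - 2 * b₀) * a :=
            mul_le_mul_of_nonneg_right hlog ha.le
          _ = 2 * a / (1 - 2 * b₀) * b j := by ring
      · have : G N j = fun _ => 1 := by
          funext t
          rw [hG]
          simp [hj, hjN]
        rw [this]
        simp only [lintegral_one, measure_univ]
        calc (1:ℝ≥0∞) = ENNReal.ofReal (Real.exp 0) := by simp
          _ ≤ _ := ENNReal.ofReal_le_ofReal (Real.exp_le_exp.2
            (mul_nonneg (div_nonneg (by linarith) hcpos.le) (hb j)))
  -- put it together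
  rw [lintegral_congr hpt, lintegral_iSup hfNmeas hfNmono]
  refine iSup_le fun N => ?_
  rw [lintegral_congr (hprod N), lintegral_prod_coord hν (G N) (hGmeas N)]
  calc ∏ j ∈ J ∪ Finset.range N, ∫⁻ t, G N j t ∂μ₁
      ≤ ∏ j ∈ J ∪ Finset.range N, ((if j ∈ J then K2 else 1) *
          ENNReal.ofReal (Real.exp (2 * a / (1 - 2 * b₀) * b j))) :=
        Finset.prod_le_prod' fun j _ => hIG N j
    _ = (∏ j ∈ J ∪ Finset.range N, if j ∈ J then K2 else 1) *
          ∏ j ∈ J ∪ Finset.range N, ENNReal.ofReal (Real.exp (2 * a / (1 - 2 * b₀) * b j)) :=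
        Finset.prod_mul_distrib
    _ ≤ K2 ^ J.card * ENNReal.ofReal (Real.exp (2 * a / (1 - 2 * b₀) * ∑' j, b j)) := by
        refine mul_le_mul' ?_ ?_
        · rw [Finset.prod_ite_mem, Finset.union_inter_cancel_left, Finset.prod_const]
        · rw [← ENNReal.ofReal_prod_of_nonneg (fun j _ => (Real.exp_nonneg _)),
            ← Real.exp_sum]
          refine ENNReal.ofReal_le_ofReal (Real.exp_le_exp.2 ?_)
          rw [← Finset.mul_sum]
          refine mul_le_mul_of_nonneg_left ?_ (by positivity)
          exact hbsum.sum_le_tsum _ (fun i _ => hb i)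
end

section
/- Let 0 < p < ∞, θ' ≥ 0, λ ≥ 0, and let r ∈ ℕ satisfy p(r − θ') > 1. Set C_{p,θ'} := ∑_{k=1}^∞ k^{−p(r−θ')} and C_{θ',λ} := sup_{k≥1} (1+λk)^{θ'} k^{−θ'}, both finite. Let ρ = (ρ_j)_{j∈ℕ} be positive reals with ∑_{j∈ℕ} ρ_j^{−p} < ∞, and let C₀, C₁ > 0. For s ∈ 𝔽 define β_s := C₀ · C₁^{|supp(s)|} · s^{−r} · ∑_{k ∈ 𝔽 : supp(k) = supp(s), |k|_∞ ≤ 2r} ρ^{−k}, where ρ^{−k} := ∏_{j∈supp(k)} ρ_j^{−k_j}. Then ∑_{s∈𝔽} ( p_s(θ',λ) · β_s )^p ≤ C₀^p · exp( K · ∑_{j∈ℕ} ( ∑_{ℓ=1}^{2r} ρ_j^{−ℓ} )^p ) < ∞, where K := (C_{θ',λ} C₁)^p · C_{p,θ'}. In particular ( p_s(θ',λ) β_s )_{s∈𝔽} ∈ ℓ_p(𝔽). -/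
open scoped Classical

/-- The weight `p_s(θ,λ) = ∏_j (1 + λ s_j)^θ` attached to a multi-index `s ∈ 𝔽`. -/
noncomputable def pweight (θ lam : ℝ) (s : ℕ →₀ ℕ) : ℝ :=
  ∏ j ∈ s.support, (1 + lam * (s j : ℝ)) ^ θ

lemma inner_tsum_eq (ρ : ℕ → ℝ) (R : ℕ) (s : ℕ →₀ ℕ) :
    (∑' k : ℕ →₀ ℕ,
      if k.support = s.support ∧ ∀ j ∈ k.support, k j ≤ R then
        ∏ j ∈ k.support, (ρ j)⁻¹ ^ (k j)
      else 0)
    = ∏ j ∈ s.support, ∑ ℓ ∈ Finset.Icc 1 R, (ρ j)⁻¹ ^ ℓ := by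
  classical
  set J := s.support with hJ
  set 𝒦 : Finset (ℕ →₀ ℕ) :=
    (J.pi fun _ => Finset.Icc 1 R).image
      (fun f => Finsupp.indicator J f) with h𝒦
  have hsupp : ∀ f ∈ J.pi fun _ => Finset.Icc 1 R,
      (Finsupp.indicator J f).support = J := by
    intro f hf
    ext j
    simp only [Finsupp.mem_support_iff]
    constructor
    · intro h
      by_contra hj
      exact h (Finsupp.indicator_of_notMem hj _)
    · intro hj
      rw [Finsupp.indicator_of_mem hj]
      have h1 : 1 ≤ f j hj := (Finset.mem_Icc.1 ((Finset.mem_pi.1 hf) j hj)).1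
      omega
  have hzero : ∀ k : ℕ →₀ ℕ, k ∉ 𝒦 →
      (if k.support = J ∧ ∀ j ∈ k.support, k j ≤ R then
        ∏ j ∈ k.support, (ρ j)⁻¹ ^ (k j) else 0) = 0 := by
    intro k hk
    rw [if_neg]
    rintro ⟨h1, h2⟩
    apply hk
    rw [h𝒦, Finset.mem_image]
    refine ⟨fun j _ => k j, ?_, ?_⟩
    · rw [Finset.mem_pi]
      intro j hj
      rw [Finset.mem_Icc]
      have hmem : j ∈ k.support := h1 ▸ hj
      have : k j ≠ 0 := Finsupp.mem_support_iff.1 hmem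
      exact ⟨by omega, h2 j hmem⟩
    · ext j
      by_cases hj : j ∈ J
      · rw [Finsupp.indicator_of_mem hj]
      · rw [Finsupp.indicator_of_notMem hj]
        have : j ∉ k.support := fun hmem => hj (h1 ▸ hmem)
        exact (Finsupp.notMem_support_iff.1 this).symm
  rw [tsum_eq_sum hzero, h𝒦, Finset.sum_image
    (fun x _ y _ h => Finsupp.indicator_injective _ h)]
  have hterm : ∀ f ∈ J.pi fun _ => Finset.Icc 1 R,
      (if (Finsupp.indicator J f).support = J ∧
          ∀ j ∈ (Finsupp.indicator J f).support, Finsupp.indicator J f j ≤ R then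
        ∏ j ∈ (Finsupp.indicator J f).support, (ρ j)⁻¹ ^ (Finsupp.indicator J f j)
      else 0)
      = ∏ x ∈ J.attach, (ρ x.1)⁻¹ ^ (f x.1 x.2) := by
    intro f hf
    rw [if_pos, hsupp f hf]
    · rw [← Finset.prod_attach J fun j => (ρ j)⁻¹ ^ (Finsupp.indicator J f j)]
      exact Finset.prod_congr rfl fun x _ => by rw [Finsupp.indicator_of_mem x.2]
    · refine ⟨hsupp f hf, ?_⟩
      rw [hsupp f hf]
      intro j hj
      rw [Finsupp.indicator_of_mem hj]
      exact (Finset.mem_Icc.1 ((Finset.mem_pi.1 hf) j hj)).2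
  rw [Finset.sum_congr rfl hterm, Finset.prod_sum]

/-- Let `0 < p < ∞`, `θ' ≥ 0`, `λ ≥ 0`, `r ∈ ℕ` with `p(r - θ') > 1`, and set
`C_{p,θ'} := ∑_{k≥1} k^{-p(r-θ')}`, `C_{θ',λ} := sup_{k≥1} (1+λk)^{θ'} k^{-θ'}`. Let `ρ_j > 0`
with `∑ ρ_j^{-p} < ∞`, `C₀, C₁ > 0`, and for `s ∈ 𝔽` set
`β_s := C₀ C₁^{|supp s|} s^{-r} ∑_{supp k = supp s, |k|_∞ ≤ 2r} ρ^{-k}`. Then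
`∑_s (p_s(θ',λ) β_s)^p ≤ C₀^p exp(K ∑_j (∑_{ℓ=1}^{2r} ρ_j^{-ℓ})^p) < ∞` with
`K := (C_{θ',λ} C₁)^p C_{p,θ'}`; in particular `(p_s(θ',λ) β_s)_s ∈ ℓ_p(𝔽)`. -/
theorem summable_weighted_beta_rho
    (p θ' lam : ℝ) (hp : 0 < p) (hθ' : 0 ≤ θ') (hlam : 0 ≤ lam)
    (r : ℕ) (hr : 1 < p * ((r : ℝ) - θ'))
    (Cpθ : ℝ) (hCpθ : Cpθ = ∑' k : ℕ, ((k : ℝ) + 1) ^ (-(p * ((r : ℝ) - θ'))))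
    (Cθlam : ℝ)
    (hCθlam : Cθlam = ⨆ k : ℕ, (1 + lam * ((k : ℝ) + 1)) ^ θ' * ((k : ℝ) + 1) ^ (-θ'))
    (ρ : ℕ → ℝ) (hρ : ∀ j, 0 < ρ j) (hρsum : Summable fun j => ρ j ^ (-p))
    (C₀ C₁ : ℝ) (hC₀ : 0 < C₀) (hC₁ : 0 < C₁)
    (β : (ℕ →₀ ℕ) → ℝ)
    (hβ : ∀ s : ℕ →₀ ℕ, β s =
      C₀ * C₁ ^ s.support.card * (∏ j ∈ s.support, ((s j : ℝ) ^ r)⁻¹) *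
        ∑' k : ℕ →₀ ℕ,
          if k.support = s.support ∧ ∀ j ∈ k.support, k j ≤ 2 * r then
            ∏ j ∈ k.support, (ρ j)⁻¹ ^ (k j)
          else 0)
    (K : ℝ) (hK : K = (Cθlam * C₁) ^ p * Cpθ) :
    Summable (fun s : ℕ →₀ ℕ => (pweight θ' lam s * β s) ^ p) ∧
    ∑' s : ℕ →₀ ℕ, (pweight θ' lam s * β s) ^ p
      ≤ C₀ ^ p * Real.exp (K * ∑' j : ℕ,
          (∑ ℓ ∈ Finset.Icc 1 (2 * r), (ρ j)⁻¹ ^ ℓ) ^ p) := by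
  classical
  have hrθ : 0 < (r : ℝ) - θ' := by nlinarith
  set e : ℝ := p * ((r : ℝ) - θ') with he
  set T : ℕ → ℝ := fun j => ∑ ℓ ∈ Finset.Icc 1 (2 * r), (ρ j)⁻¹ ^ ℓ with hT
  have hTnn : ∀ j, 0 ≤ T j := fun j =>
    Finset.sum_nonneg fun ℓ _ => pow_nonneg (inv_nonneg.2 (hρ j).le) _
  -- Cθlam facts
  have hbdd : BddAbove (Set.range fun k : ℕ =>
      (1 + lam * ((k : ℝ) + 1)) ^ θ' * ((k : ℝ) + 1) ^ (-θ')) := by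
    refine ⟨(1 + lam) ^ θ', ?_⟩
    rintro x ⟨k, rfl⟩
    dsimp only
    have hk1 : (0 : ℝ) < (k : ℝ) + 1 := by positivity
    have heq : (1 + lam * ((k : ℝ) + 1)) ^ θ' * ((k : ℝ) + 1) ^ (-θ')
        = ((1 + lam * ((k : ℝ) + 1)) * ((k : ℝ) + 1)⁻¹) ^ θ' := by
      rw [Real.rpow_neg hk1.le, ← Real.inv_rpow hk1.le,
        ← Real.mul_rpow (by positivity) (by positivity)]
    rw [heq]
    apply Real.rpow_le_rpow (by positivity) ?_ hθ'
    rw [add_mul]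
    have h2 : lam * ((k : ℝ) + 1) * ((k : ℝ) + 1)⁻¹ = lam := by field_simp
    have h3 : ((k : ℝ) + 1)⁻¹ ≤ 1 := by
      rw [inv_le_one_iff₀]; right; linarith
    rw [h2, one_mul]; linarith
  have hCθ_nn : 0 ≤ Cθlam := by
    rw [hCθlam]
    refine le_trans ?_ (le_ciSup hbdd 0)
    positivity
  have hCθ_ge : ∀ m : ℕ, 1 ≤ m → (1 + lam * (m : ℝ)) ^ θ' ≤ Cθlam * (m : ℝ) ^ θ' := by
    intro m hm
    have hm0 : (0 : ℝ) < m := by exact_mod_cast hm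
    have hle := le_ciSup hbdd (m - 1)
    rw [← hCθlam] at hle
    have hcast : ((m - 1 : ℕ) : ℝ) + 1 = (m : ℝ) := by
      have : 1 ≤ m := hm
      push_cast [this]; ring
    rw [hcast] at hle
    calc (1 + lam * (m : ℝ)) ^ θ'
        = (1 + lam * (m : ℝ)) ^ θ' * (m : ℝ) ^ (-θ') * (m : ℝ) ^ θ' := by
          rw [mul_assoc, ← Real.rpow_add hm0, neg_add_cancel, Real.rpow_zero, mul_one]
      _ ≤ Cθlam * (m : ℝ) ^ θ' := by
          apply mul_le_mul_of_nonneg_right hle (Real.rpow_nonneg hm0.le _)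
  -- Cpθ facts
  have he1 : 1 < e := hr
  have hsum_e : Summable (fun k : ℕ => ((k : ℝ) + 1) ^ (-e)) := by
    have h1 : Summable (fun n : ℕ => (n : ℝ) ^ (-e)) := by
      rw [Real.summable_nat_rpow]; linarith
    have h2 := (summable_nat_add_iff 1).2 h1
    refine h2.congr fun n => ?_
    push_cast; ring_nf
  have hCpθ_partial : ∀ M : ℕ, ∑ m ∈ Finset.Icc 1 M, (m : ℝ) ^ (-e) ≤ Cpθ := by
    intro M
    rw [hCpθ]
    have heq : ∑ m ∈ Finset.Icc 1 M, (m : ℝ) ^ (-e)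
        = ∑ k ∈ Finset.range M, ((k : ℝ) + 1) ^ (-e) := by
      induction M with
      | zero => simp
      | succ n ih =>
        rw [Finset.sum_Icc_succ_top (by omega), ih, Finset.sum_range_succ,
          Nat.cast_add, Nat.cast_one]
    rw [heq]
    exact Summable.sum_le_tsum _ (fun k _ => Real.rpow_nonneg (by positivity) _) hsum_e
  have hCpθ_nn : 0 ≤ Cpθ := le_trans (by simp) (hCpθ_partial 0)
  have hKnn : 0 ≤ K := by
    rw [hK]; exact mul_nonneg (Real.rpow_nonneg (mul_nonneg hCθ_nn hC₁.le) _) hCpθ_nn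
  -- product form of β
  have hbeta : ∀ s : ℕ →₀ ℕ, β s = C₀ * ∏ j ∈ s.support,
      (C₁ * ((s j : ℝ) ^ r)⁻¹ * T j) := by
    intro s
    rw [hβ s, inner_tsum_eq]
    rw [Finset.prod_mul_distrib, Finset.prod_mul_distrib, Finset.prod_const]
    ring
  have hfac_nn : ∀ (s : ℕ →₀ ℕ) j, 0 ≤ (1 + lam * (s j : ℝ)) ^ θ' *
      (C₁ * ((s j : ℝ) ^ r)⁻¹ * T j) := by
    intro s j
    have := hTnn j
    have h1 : (0:ℝ) < 1 + lam * (s j : ℝ) := by positivity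
    positivity
  have hterm : ∀ s : ℕ →₀ ℕ,
      (pweight θ' lam s * β s) ^ p
        = C₀ ^ p * ∏ j ∈ s.support,
            ((1 + lam * (s j : ℝ)) ^ θ' * (C₁ * ((s j : ℝ) ^ r)⁻¹ * T j)) ^ p := by
    intro s
    rw [hbeta s]
    have hcollect : pweight θ' lam s * (C₀ * ∏ j ∈ s.support, (C₁ * ((s j : ℝ) ^ r)⁻¹ * T j))
        = C₀ * ∏ j ∈ s.support,
            ((1 + lam * (s j : ℝ)) ^ θ' * (C₁ * ((s j : ℝ) ^ r)⁻¹ * T j)) := by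
      rw [pweight, mul_left_comm, ← Finset.prod_mul_distrib]
    rw [hcollect, Real.mul_rpow hC₀.le (Finset.prod_nonneg fun j _ => hfac_nn s j),
      ← Real.finset_prod_rpow _ _ (fun j _ => hfac_nn s j)]
  -- the dominating single-coordinate weight
  set g : ℕ → ℕ → ℝ := fun j m => (Cθlam * C₁) ^ p * (m : ℝ) ^ (-e) * (T j) ^ p with hg
  have hg_nn : ∀ j m, 0 ≤ g j m := by
    intro j m
    exact mul_nonneg (mul_nonneg (Real.rpow_nonneg (mul_nonneg hCθ_nn hC₁.le) _)
      (Real.rpow_nonneg (Nat.cast_nonneg m) _)) (Real.rpow_nonneg (hTnn j) _)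
  have hfac : ∀ (j m : ℕ), 1 ≤ m →
      ((1 + lam * (m : ℝ)) ^ θ' * (C₁ * ((m : ℝ) ^ r)⁻¹ * T j)) ^ p ≤ g j m := by
    intro j m hm
    have hm0 : (0 : ℝ) < m := by exact_mod_cast hm
    have hbase_nn : 0 ≤ (1 + lam * (m : ℝ)) ^ θ' * (C₁ * ((m : ℝ) ^ r)⁻¹ * T j) := by
      have := hTnn j
      have h1 : (0:ℝ) < 1 + lam * (m : ℝ) := by positivity
      positivity
    have hpow : (m : ℝ) ^ θ' * ((m : ℝ) ^ r)⁻¹ = (m : ℝ) ^ (θ' - (r : ℝ)) := by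
      rw [← Real.rpow_natCast m r, ← Real.rpow_neg hm0.le, ← Real.rpow_add hm0]
      ring_nf
    have h2 : (1 + lam * (m : ℝ)) ^ θ' * (C₁ * ((m : ℝ) ^ r)⁻¹ * T j)
        ≤ (Cθlam * C₁) * ((m : ℝ) ^ (θ' - (r : ℝ)) * T j) := by
      have hstep : (1 + lam * (m : ℝ)) ^ θ' * (C₁ * ((m : ℝ) ^ r)⁻¹ * T j)
          ≤ (Cθlam * (m : ℝ) ^ θ') * (C₁ * ((m : ℝ) ^ r)⁻¹ * T j) := by
        apply mul_le_mul_of_nonneg_right (hCθ_ge m hm)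
        have := hTnn j
        positivity
      refine hstep.trans (le_of_eq ?_)
      rw [← hpow]; ring
    have h3 := Real.rpow_le_rpow hbase_nn h2 hp.le
    refine h3.trans (le_of_eq ?_)
    rw [Real.mul_rpow (mul_nonneg hCθ_nn hC₁.le) (mul_nonneg (Real.rpow_nonneg hm0.le _) (hTnn j)),
      Real.mul_rpow (Real.rpow_nonneg hm0.le _) (hTnn j),
      ← Real.rpow_mul hm0.le]
    have : (θ' - (r : ℝ)) * p = -e := by rw [he]; ring
    rw [this]; simp only [hg]; ring
  -- summability of (T j)^p
  have hTsum : Summable (fun j => (T j) ^ p) := by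
    have h0 : Filter.Tendsto (fun j => ρ j ^ (-p)) Filter.cofinite (nhds 0) :=
      hρsum.tendsto_cofinite_zero
    have hev : ∀ᶠ j in Filter.cofinite, ρ j ^ (-p) < 1 :=
      h0.eventually_lt_const one_pos
    have hev1 : ∀ᶠ j in Filter.cofinite, 1 ≤ ρ j := by
      filter_upwards [hev] with j hj
      by_contra hlt
      push_neg at hlt
      have : 1 < ρ j ^ (-p) := by
        apply (Real.one_lt_rpow_iff_of_pos (hρ j)).2
        right; exact ⟨hlt, by linarith⟩
      linarith
    apply Summable.of_norm_bounded_eventually (g := fun j => ((2*r : ℕ) : ℝ) ^ p * ρ j ^ (-p))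
      (hρsum.mul_left _)
    filter_upwards [hev1] with j hj
    have hρj1 : (ρ j)⁻¹ ≤ 1 := by rw [inv_le_one_iff₀]; right; exact hj
    have hTj : T j ≤ ((2*r : ℕ) : ℝ) * (ρ j)⁻¹ := by
      calc T j ≤ ∑ ℓ ∈ Finset.Icc 1 (2*r), (ρ j)⁻¹ := by
            apply Finset.sum_le_sum
            intro ℓ hℓ
            have h1 : 1 ≤ ℓ := (Finset.mem_Icc.1 hℓ).1
            calc (ρ j)⁻¹ ^ ℓ ≤ (ρ j)⁻¹ ^ 1 :=
                  pow_le_pow_of_le_one (by positivity) hρj1 h1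
              _ = (ρ j)⁻¹ := pow_one _
        _ = ((2*r : ℕ) : ℝ) * (ρ j)⁻¹ := by
            rw [Finset.sum_const, Nat.card_Icc]
            simp
    have hnorm : ‖(T j) ^ p‖ = (T j) ^ p := Real.norm_of_nonneg (Real.rpow_nonneg (hTnn j) p)
    rw [hnorm]
    calc (T j) ^ p ≤ (((2*r:ℕ):ℝ) * (ρ j)⁻¹) ^ p :=
          Real.rpow_le_rpow (hTnn j) hTj hp.le
      _ = ((2*r:ℕ):ℝ) ^ p * ρ j ^ (-p) := by
          rw [Real.mul_rpow (by positivity) (by positivity), Real.rpow_neg (hρ j).le,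
            Real.inv_rpow (hρ j).le]
  -- key finite-sum bound
  have key : ∀ U : Finset (ℕ →₀ ℕ), ∑ s ∈ U, (pweight θ' lam s * β s) ^ p
      ≤ C₀ ^ p * Real.exp (K * ∑' j : ℕ, (T j) ^ p) := by
    intro U
    set J : Finset ℕ := U.sup Finsupp.support with hJ
    set M : ℕ := U.sup (fun s => s.support.sup s) with hM
    have hsuppJ : ∀ s ∈ U, s.support ⊆ J := fun s hs => Finset.le_sup hs
    have hvalM : ∀ s ∈ U, ∀ j, s j ≤ M := by
      intro s hs j
      by_cases hj : j ∈ s.support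
      · exact le_trans (Finset.le_sup hj) (Finset.le_sup (f := fun s => s.support.sup s) hs)
      · simp [Finsupp.notMem_support_iff.1 hj]
    set h : ℕ → ℕ → ℝ := fun j m => if m = 0 then 1 else g j m with hh
    have hh_nn : ∀ j m, 0 ≤ h j m := by
      intro j m
      by_cases hm : m = 0 <;> simp [hh, hm, hg_nn j m]
    have step1 : ∀ s ∈ U, (pweight θ' lam s * β s) ^ p ≤ C₀ ^ p * ∏ j ∈ J, h j (s j) := by
      intro s hs
      rw [hterm s]
      apply mul_le_mul_of_nonneg_left ?_ (Real.rpow_nonneg hC₀.le p)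
      have hA : ∏ j ∈ s.support,
            ((1 + lam * (s j : ℝ)) ^ θ' * (C₁ * ((s j:ℝ)^r)⁻¹ * T j)) ^ p
          ≤ ∏ j ∈ s.support, h j (s j) := by
        apply Finset.prod_le_prod
        · intro j _; exact Real.rpow_nonneg (hfac_nn s j) p
        · intro j hj
          have h1 : s j ≠ 0 := Finsupp.mem_support_iff.1 hj
          have hgh : h j (s j) = g j (s j) := by simp [hh, h1]
          rw [hgh]
          exact hfac j (s j) (Nat.one_le_iff_ne_zero.2 h1)
      refine hA.trans (le_of_eq (Finset.prod_subset (hsuppJ s hs) ?_))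
      intro j _ hj
      simp [hh, Finsupp.notMem_support_iff.1 hj]
    have step2 : ∑ s ∈ U, ∏ j ∈ J, h j (s j)
        ≤ ∏ j ∈ J, ∑ m ∈ Finset.range (M+1), h j m := by
      rw [Finset.prod_sum]
      set em : (ℕ →₀ ℕ) → (∀ a ∈ J, ℕ) := fun s => fun j _ => s j with hem
      have hinj : ∀ s ∈ U, ∀ t ∈ U, em s = em t → s = t := by
        intro s hs t ht hst
        ext j
        by_cases hj : j ∈ J
        · have := congrFun (congrFun hst j) hj
          simpa [hem] using this
        · rw [Finsupp.notMem_support_iff.1 (fun hmem => hj (hsuppJ s hs hmem)),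
            Finsupp.notMem_support_iff.1 (fun hmem => hj (hsuppJ t ht hmem))]
      calc ∑ s ∈ U, ∏ j ∈ J, h j (s j)
          = ∑ f ∈ U.image em, ∏ x ∈ J.attach, h x.1 (f x.1 x.2) := by
            rw [Finset.sum_image hinj]
            refine Finset.sum_congr rfl fun s hs => ?_
            rw [← Finset.prod_attach J (fun j => h j (s j))]
        _ ≤ ∑ f ∈ J.pi (fun _ => Finset.range (M+1)),
              ∏ x ∈ J.attach, h x.1 (f x.1 x.2) := by
            apply Finset.sum_le_sum_of_subset_of_nonneg
            · intro f hf
              rw [Finset.mem_image] at hf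
              obtain ⟨s, hs, rfl⟩ := hf
              rw [Finset.mem_pi]
              intro j hj
              rw [Finset.mem_range]
              exact Nat.lt_succ_of_le (hvalM s hs j)
            · intro f _ _
              exact Finset.prod_nonneg fun x _ => hh_nn x.1 _
    have step3 : ∀ j ∈ J, ∑ m ∈ Finset.range (M+1), h j m ≤ Real.exp (K * (T j) ^ p) := by
      intro j _
      have hsplit : Finset.range (M+1) = insert 0 (Finset.Icc 1 M) := by
        ext m
        simp only [Finset.mem_range, Finset.mem_insert, Finset.mem_Icc]
        omega
      rw [hsplit, Finset.sum_insert (by simp)]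
      have h0 : h j 0 = 1 := by simp [hh]
      have hrest : ∑ m ∈ Finset.Icc 1 M, h j m ≤ K * (T j) ^ p := by
        have heq1 : ∑ m ∈ Finset.Icc 1 M, h j m = ∑ m ∈ Finset.Icc 1 M, g j m := by
          refine Finset.sum_congr rfl fun m hm => ?_
          have h1 : 1 ≤ m := (Finset.mem_Icc.1 hm).1
          have : m ≠ 0 := by omega
          simp [hh, this]
        rw [heq1]
        have hgsum : ∑ m ∈ Finset.Icc 1 M, g j m
            = ((Cθlam*C₁)^p * ∑ m ∈ Finset.Icc 1 M, (m:ℝ)^(-e)) * (T j)^p := by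
          simp only [hg]
          rw [← Finset.sum_mul, ← Finset.mul_sum]
        rw [hgsum, hK]
        apply mul_le_mul_of_nonneg_right ?_ (Real.rpow_nonneg (hTnn j) p)
        exact mul_le_mul_of_nonneg_left (hCpθ_partial M)
          (Real.rpow_nonneg (mul_nonneg hCθ_nn hC₁.le) p)
      rw [h0]
      have := Real.add_one_le_exp (K * (T j) ^ p)
      linarith
    calc ∑ s ∈ U, (pweight θ' lam s * β s) ^ p
        ≤ ∑ s ∈ U, C₀ ^ p * ∏ j ∈ J, h j (s j) := Finset.sum_le_sum step1
      _ = C₀ ^ p * ∑ s ∈ U, ∏ j ∈ J, h j (s j) := by rw [Finset.mul_sum]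
      _ ≤ C₀ ^ p * ∏ j ∈ J, ∑ m ∈ Finset.range (M+1), h j m :=
          mul_le_mul_of_nonneg_left step2 (Real.rpow_nonneg hC₀.le p)
      _ ≤ C₀ ^ p * Real.exp (K * ∑' j : ℕ, (T j) ^ p) := by
          apply mul_le_mul_of_nonneg_left ?_ (Real.rpow_nonneg hC₀.le p)
          calc ∏ j ∈ J, ∑ m ∈ Finset.range (M+1), h j m
              ≤ ∏ j ∈ J, Real.exp (K * (T j) ^ p) := by
                apply Finset.prod_le_prod
                · intro j _; exact Finset.sum_nonneg fun m _ => hh_nn j m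
                · exact step3
            _ = Real.exp (∑ j ∈ J, K * (T j) ^ p) := (Real.exp_sum _ _).symm
            _ ≤ Real.exp (K * ∑' j : ℕ, (T j) ^ p) := by
                apply Real.exp_le_exp.2
                rw [← Finset.mul_sum]
                apply mul_le_mul_of_nonneg_left ?_ hKnn
                exact Summable.sum_le_tsum J (fun j _ => Real.rpow_nonneg (hTnn j) p) hTsum
  -- conclusion
  have hnn : ∀ s : ℕ →₀ ℕ, 0 ≤ (pweight θ' lam s * β s) ^ p := by
    intro s
    apply Real.rpow_nonneg
    apply mul_nonneg
    · exact Finset.prod_nonneg fun j _ => Real.rpow_nonneg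
        (add_nonneg zero_le_one (mul_nonneg hlam (Nat.cast_nonneg _))) θ'
    · rw [hbeta s]
      refine mul_nonneg hC₀.le (Finset.prod_nonneg fun j _ => ?_)
      have := hTnn j
      positivity
  have hsummable := summable_of_sum_le hnn key
  exact ⟨hsummable, Summable.tsum_le_of_sum_le hsummable key⟩
end

section
/- Let 0 < p ≤ 1, θ' ≥ 0, λ ≥ 0, and let r ∈ ℕ satisfy p(r − θ') > 1. Set C_{p,θ'} := ∑_{k=1}^∞ k^{−p(r−θ')} and C_{θ',λ} := sup_{k≥1} (1+λk)^{θ'} k^{−θ'}, both finite. Let C₁, C₂ > 0, and let b = (b_j)_{j∈ℕ} be nonnegative reals with ∑_{j∈ℕ} b_j^p < ∞ and K · ∑_{j∈ℕ} b_j < 1, where K := e · max{1, C_{θ',λ} C₂ C_{p,θ'}^{1/p}}. For s ∈ 𝔽 define β_s := C₁ · C₂^{|supp(s)|} · s^{−r} · ∑_{k ∈ 𝔽 : supp(k) = supp(s), |k|_∞ ≤ 2r} (e·b)^k · |k|_1! / k!. Then ∑_{s∈𝔽} ( p_s(θ',λ) β_s )^p ≤ C₁^p · ∑_{k∈𝔽}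 ( (K·b)^k · |k|_1!/k! )^p < ∞; in particular ( p_s(θ',λ) β_s )_{s∈𝔽} ∈ ℓ_p(𝔽). -/
open scoped Classical

/-- For a sequence `c : ℕ → ℝ` and a multi-index `k ∈ 𝔽`, the quantity
`c^k |k|_1! / k! = (∏_{j∈supp k} c_j^{k_j}) ⬝ (|k|_1)! / ∏_j (k_j)!`. -/
noncomputable def monomialFactor (c : ℕ → ℝ) (k : ℕ →₀ ℕ) : ℝ :=
  (∏ j ∈ k.support, c j ^ (k j)) *
    ((k.sum fun _ n => n).factorial : ℝ) / ∏ j ∈ k.support, ((k j).factorial : ℝ)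

open scoped ENNReal NNReal BigOperators

noncomputable section StmtAux

/-- multinomial coefficient of a multi-index -/
def mlt (k : ℕ →₀ ℕ) : ℕ := Nat.multinomial k.support k

/-- total degree -/
def deg (k : ℕ →₀ ℕ) : ℕ := k.sum fun _ n => n

/-- monomial `x^k` in `ℝ≥0∞` -/
def Xp (x : ℕ → ℝ≥0∞) (k : ℕ →₀ ℕ) : ℝ≥0∞ := k.prod fun j n => x j ^ n

/-- `x^k ⬝ |k|!/k!` in `ℝ≥0∞` -/
def MF (x : ℕ → ℝ≥0∞) (k : ℕ →₀ ℕ) : ℝ≥0∞ := Xp x k * (mlt k : ℝ≥0∞)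

lemma deg_eq_sum (k : ℕ →₀ ℕ) : deg k = ∑ j ∈ k.support, k j := rfl

lemma mlt_spec (k : ℕ →₀ ℕ) :
    (∏ j ∈ k.support, (k j).factorial) * mlt k = (deg k).factorial :=
  Nat.multinomial_spec _ _

lemma mlt_pos (k : ℕ →₀ ℕ) : 0 < mlt k := Nat.multinomial_pos _ _

lemma mlt_zero : mlt 0 = 1 := by
  simp [mlt, Nat.multinomial_empty]

lemma deg_zero : deg 0 = 0 := by simp [deg]

lemma deg_eq_zero_iff (k : ℕ →₀ ℕ) : deg k = 0 ↔ k = 0 := by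
  constructor
  · intro h
    ext j
    simp only [Finsupp.coe_zero, Pi.zero_apply]
    by_contra hj
    have hjs : j ∈ k.support := Finsupp.mem_support_iff.2 hj
    have : k j ≤ deg k := by
      rw [deg_eq_sum]
      exact Finset.single_le_sum (fun i _ => Nat.zero_le _) hjs
    omega
  · rintro rfl; exact deg_zero

lemma deg_add (u v : ℕ →₀ ℕ) : deg (u + v) = deg u + deg v := by
  unfold deg
  exact Finsupp.sum_add_index' (fun _ => rfl) (fun _ _ _ => rfl)

lemma deg_single (j n : ℕ) : deg (Finsupp.single j n) = n := by
  unfold deg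
  exact Finsupp.sum_single_index rfl

lemma Xp_add (x : ℕ → ℝ≥0∞) (u v : ℕ →₀ ℕ) : Xp x (u + v) = Xp x u * Xp x v :=
  Finsupp.prod_add_index' (fun a => pow_zero _) (fun a b c => pow_add _ _ _)

lemma Xp_single (x : ℕ → ℝ≥0∞) (j n : ℕ) : Xp x (Finsupp.single j n) = x j ^ n :=
  Finsupp.prod_single_index (pow_zero _)

lemma Xp_zero (x : ℕ → ℝ≥0∞) : Xp x 0 = 1 := rfl


lemma single_le_of_mem {k : ℕ →₀ ℕ} {j : ℕ} (hj : j ∈ k.support) :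
    Finsupp.single j 1 ≤ k := by
  rw [Finsupp.single_le_iff]
  exact Nat.one_le_iff_ne_zero.2 (Finsupp.mem_support_iff.1 hj)

lemma sub_add_single {k : ℕ →₀ ℕ} {j : ℕ} (hj : j ∈ k.support) :
    k - Finsupp.single j 1 + Finsupp.single j 1 = k :=
  tsub_add_cancel_of_le (single_le_of_mem hj)

lemma deg_sub_single {k : ℕ →₀ ℕ} {j : ℕ} (hj : j ∈ k.support) :
    deg (k - Finsupp.single j 1) + 1 = deg k := by
  conv_rhs => rw [← sub_add_single hj]
  rw [deg_add, deg_single]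

lemma prod_fact_sub_single {k k' : ℕ →₀ ℕ} {j : ℕ} (hj : j ∈ k.support)
    (hk' : k' = k - Finsupp.single j 1) :
    (∏ i ∈ k'.support, (k' i).factorial) * k j = ∏ i ∈ k.support, (k i).factorial := by
  have hsub : k'.support ⊆ k.support := hk' ▸ Finsupp.support_tsub
  have h1 : ∏ i ∈ k'.support, (k' i).factorial = ∏ i ∈ k.support, (k' i).factorial :=
    Finset.prod_subset hsub (by
      intro i _ hi
      have : k' i = 0 := Finsupp.notMem_support_iff.1 hi
      simp [this])
  have hkj : 0 < k j := Nat.pos_of_ne_zero (Finsupp.mem_support_iff.1 hj)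
  have h2 : ∏ i ∈ k.support, (k' i).factorial
      = (k j - 1).factorial * ∏ i ∈ k.support \ {j}, (k i).factorial := by
    rw [Finset.prod_eq_mul_prod_sdiff_singleton_of_mem hj]
    congr 1
    · rw [hk', Finsupp.tsub_apply, Finsupp.single_eq_same]
    · apply Finset.prod_congr rfl
      intro i hi
      have hij : i ≠ j := by
        intro h; rw [h] at hi; exact (Finset.mem_sdiff.1 hi).2 (Finset.mem_singleton_self j)
      rw [hk', Finsupp.tsub_apply, Finsupp.single_eq_of_ne hij, Nat.sub_zero]
  rw [h1, h2, Finset.prod_eq_mul_prod_sdiff_singleton_of_mem hj (fun i => (k i).factorial)]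
  rw [mul_right_comm, mul_comm ((k j - 1).factorial) (k j), Nat.mul_factorial_pred hkj.ne']

lemma mlt_rec {k : ℕ →₀ ℕ} (hk : k ≠ 0) :
    mlt k = ∑ j ∈ k.support, mlt (k - Finsupp.single j 1) := by
  have hPpos : 0 < ∏ i ∈ k.support, (k i).factorial :=
    Finset.prod_pos (fun i _ => Nat.factorial_pos _)
  have hn : 0 < deg k := by
    rcases Nat.eq_zero_or_pos (deg k) with h | h
    · exact absurd ((deg_eq_zero_iff k).1 h) hk
    · exact h
  apply Nat.eq_of_mul_eq_mul_left hPpos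
  rw [Finset.mul_sum]
  have key : ∀ j ∈ k.support, (∏ i ∈ k.support, (k i).factorial) * mlt (k - Finsupp.single j 1)
      = k j * (deg k - 1).factorial := by
    intro j hj
    have hspec := mlt_spec (k - Finsupp.single j 1)
    have hdeg : deg (k - Finsupp.single j 1) = deg k - 1 := by
      have := deg_sub_single hj; omega
    calc (∏ i ∈ k.support, (k i).factorial) * mlt (k - Finsupp.single j 1)
        = ((∏ i ∈ (k - Finsupp.single j 1).support, ((k - Finsupp.single j 1 : ℕ →₀ ℕ) i).factorial)
            * k j) * mlt (k - Finsupp.single j 1) := by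
          rw [prod_fact_sub_single hj rfl]
      _ = k j * ((∏ i ∈ (k - Finsupp.single j 1).support,
            ((k - Finsupp.single j 1 : ℕ →₀ ℕ) i).factorial) * mlt (k - Finsupp.single j 1)) := by ring
      _ = k j * (deg k - 1).factorial := by rw [hspec, hdeg]
  rw [Finset.sum_congr rfl key, ← Finset.sum_mul, ← deg_eq_sum]
  rw [mlt_spec, ← Nat.mul_factorial_pred hn.ne']


lemma MF_zero (x : ℕ → ℝ≥0∞) : MF x 0 = 1 := by
  simp [MF, Xp_zero, mlt_zero]

lemma tsum_deg_ite (F : (ℕ →₀ ℕ) → ℝ≥0∞) :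
    ∑' k, F k = ∑' n : ℕ, ∑' k, if deg k = n then F k else 0 := by
  have h : ∀ k, F k = ∑' n : ℕ, if deg k = n then F k else 0 := by
    intro k
    simp only [eq_comm (a := deg k)]
    exact (tsum_ite_eq (deg k) (fun _ => F k)).symm
  calc ∑' k, F k = ∑' (k : ℕ →₀ ℕ) (n : ℕ), if deg k = n then F k else 0 := tsum_congr h
    _ = ∑' (n : ℕ) (k : ℕ →₀ ℕ), if deg k = n then F k else 0 := ENNReal.tsum_comm

lemma tsum_slice (x : ℕ → ℝ≥0∞) (n : ℕ) :
    ∑' k : ℕ →₀ ℕ, (if deg k = n then MF x k else 0) = (∑' j, x j) ^ n := by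
  induction n with
  | zero =>
    rw [pow_zero, tsum_eq_single (0 : ℕ →₀ ℕ)]
    · simp [deg_zero, MF_zero]
    · intro k hk
      rw [if_neg]
      intro h; exact hk ((deg_eq_zero_iff k).1 h)
  | succ n ih =>
    have step1 : ∀ k : ℕ →₀ ℕ, (if deg k = n+1 then MF x k else 0)
        = ∑' j : ℕ, (if deg k = n+1 ∧ j ∈ k.support then
            Xp x k * (mlt (k - Finsupp.single j 1) : ℝ≥0∞) else 0) := by
      intro k
      by_cases hd : deg k = n+1
      · have hk0 : k ≠ 0 := by
          intro h; rw [h, deg_zero] at hd; omega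
        rw [if_pos hd, tsum_eq_sum (s := k.support)
          (by intro j hj; rw [if_neg]; rintro ⟨_, hj'⟩; exact hj hj')]
        rw [MF, mlt_rec hk0]
        push_cast
        rw [Finset.mul_sum]
        apply Finset.sum_congr rfl
        intro j hj
        rw [if_pos ⟨hd, hj⟩]
      · rw [if_neg hd]
        symm
        simp [hd]
    have step2 : ∀ j : ℕ,
        (∑' k : ℕ →₀ ℕ, if deg k = n+1 ∧ j ∈ k.support then
            Xp x k * (mlt (k - Finsupp.single j 1) : ℝ≥0∞) else 0)
        = x j * ∑' k' : ℕ →₀ ℕ, (if deg k' = n then MF x k' else 0) := by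
      intro j
      rw [← ENNReal.tsum_mul_left]
      refine tsum_eq_tsum_of_ne_zero_bij
        (fun m => (m.1 : ℕ →₀ ℕ) + Finsupp.single j 1) ?_ ?_ ?_
      · intro m m' hmm'
        exact Subtype.ext (add_left_injective _ hmm')
      · intro k hk
        simp only [Function.mem_support] at hk
        have hd : deg k = n+1 ∧ j ∈ k.support := by
          by_contra h; rw [if_neg h] at hk; exact hk rfl
        have hval : (if deg k = n+1 ∧ j ∈ k.support then
            Xp x k * (mlt (k - Finsupp.single j 1) : ℝ≥0∞) else 0)
            = Xp x k * (mlt (k - Finsupp.single j 1) : ℝ≥0∞) := if_pos hd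
        have hrec := sub_add_single hd.2
        have hdeg' : deg (k - Finsupp.single j 1) = n := by
          have := deg_sub_single hd.2; omega
        have hXp : Xp x k = Xp x (k - Finsupp.single j 1) * x j := by
          conv_lhs => rw [← hrec]
          rw [Xp_add, Xp_single, pow_one]
        refine Set.mem_range.mpr ⟨⟨k - Finsupp.single j 1, ?_⟩, hrec⟩
        simp only [Function.mem_support, if_pos hdeg', MF]
        intro h0
        apply hk
        rw [hval, hXp]
        calc Xp x (k - Finsupp.single j 1) * x j * (mlt (k - Finsupp.single j 1) : ℝ≥0∞)
            = x j * (Xp x (k - Finsupp.single j 1) * (mlt (k - Finsupp.single j 1) : ℝ≥0∞)) := by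
              ring
          _ = 0 := h0
      · intro m
        beta_reduce
        have hmem := m.2
        simp only [Function.mem_support] at hmem
        have hd' : deg (m : ℕ →₀ ℕ) = n := by
          by_contra h
          rw [if_neg h, mul_zero] at hmem; exact hmem rfl
        have hdeg : deg ((m : ℕ →₀ ℕ) + Finsupp.single j 1) = n + 1 := by
          rw [deg_add, deg_single, hd']
        have hjmem : j ∈ ((m : ℕ →₀ ℕ) + Finsupp.single j 1).support := by
          rw [Finsupp.mem_support_iff, Finsupp.add_apply, Finsupp.single_eq_same]
          omega
        have hsub : (m : ℕ →₀ ℕ) + Finsupp.single j 1 - Finsupp.single j 1 = (m : ℕ →₀ ℕ) :=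
          add_tsub_cancel_right _ _
        rw [if_pos (show _ ∧ _ from ⟨by omega, hjmem⟩), hsub, if_pos hd', MF]
        rw [Xp_add, Xp_single, pow_one]
        ring
    calc ∑' k : ℕ →₀ ℕ, (if deg k = n+1 then MF x k else 0)
        = ∑' (k : ℕ →₀ ℕ) (j : ℕ), (if deg k = n+1 ∧ j ∈ k.support then
            Xp x k * (mlt (k - Finsupp.single j 1) : ℝ≥0∞) else 0) := tsum_congr step1
      _ = ∑' (j : ℕ) (k : ℕ →₀ ℕ), (if deg k = n+1 ∧ j ∈ k.support then
            Xp x k * (mlt (k - Finsupp.single j 1) : ℝ≥0∞) else 0) := ENNReal.tsum_comm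
      _ = ∑' j : ℕ, x j * ∑' k' : ℕ →₀ ℕ, (if deg k' = n then MF x k' else 0) :=
          tsum_congr step2
      _ = ∑' j : ℕ, x j * (∑' i, x i) ^ n := by rw [ih]
      _ = (∑' j, x j) ^ (n+1) := by
          rw [ENNReal.tsum_mul_right, pow_succ, mul_comm]

lemma tsum_MF (x : ℕ → ℝ≥0∞) :
    ∑' k : ℕ →₀ ℕ, MF x k = ∑' n : ℕ, (∑' j, x j) ^ n := by
  rw [tsum_deg_ite (fun k => MF x k)]
  exact tsum_congr (tsum_slice x)


lemma mlt_add_of_disjoint {u v : ℕ →₀ ℕ} (hd : Disjoint u.support v.support) :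
    mlt (u + v) = (deg u + deg v).choose (deg v) * mlt u * mlt v := by
  have hPu : 0 < ∏ i ∈ u.support, (u i).factorial :=
    Finset.prod_pos fun _ _ => Nat.factorial_pos _
  have hPv : 0 < ∏ i ∈ v.support, (v i).factorial :=
    Finset.prod_pos fun _ _ => Nat.factorial_pos _
  have hsupp : (u+v).support = u.support ∪ v.support := Finsupp.support_add_eq hd
  have hprod : ∏ i ∈ (u+v).support, ((u+v : ℕ →₀ ℕ) i).factorial
      = (∏ i ∈ u.support, (u i).factorial) * ∏ i ∈ v.support, (v i).factorial := by
    rw [hsupp, Finset.prod_union hd]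
    congr 1
    · apply Finset.prod_congr rfl; intro i hi
      have hvi : v i = 0 := Finsupp.notMem_support_iff.1 (Finset.disjoint_left.1 hd hi)
      rw [Finsupp.add_apply, hvi, add_zero]
    · apply Finset.prod_congr rfl; intro i hi
      have hui : u i = 0 := Finsupp.notMem_support_iff.1 (Finset.disjoint_right.1 hd hi)
      rw [Finsupp.add_apply, hui, zero_add]
  have h1 := mlt_spec (u+v)
  rw [hprod, deg_add] at h1
  have hch : (deg u + deg v).factorial
      = (deg u + deg v).choose (deg v) * (deg v).factorial * (deg u).factorial := by
    have h := Nat.choose_mul_factorial_mul_factorial (Nat.le_add_left (deg v) (deg u))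
    rw [Nat.add_sub_cancel] at h
    exact h.symm
  apply Nat.eq_of_mul_eq_mul_left (Nat.mul_pos hPu hPv)
  calc (∏ i ∈ u.support, (u i).factorial) * (∏ i ∈ v.support, (v i).factorial) * mlt (u+v)
      = (deg u + deg v).factorial := h1
    _ = (deg u + deg v).choose (deg v) * ((deg v).factorial) * ((deg u).factorial) := hch
    _ = (deg u + deg v).choose (deg v)
        * ((∏ i ∈ v.support, (v i).factorial) * mlt v)
        * ((∏ i ∈ u.support, (u i).factorial) * mlt u) := by rw [mlt_spec, mlt_spec]
    _ = (∏ i ∈ u.support, (u i).factorial) * (∏ i ∈ v.support, (v i).factorial)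
        * ((deg u + deg v).choose (deg v) * mlt u * mlt v) := by ring

lemma choose_le_real (a b : ℕ) {e : ℝ} (he : 0 < e) :
    (((a+b).choose b : ℕ) : ℝ) ≤ (1+e)^a * ((1+e)/e)^b := by
  have hpb : (0:ℝ) < e^b := pow_pos he b
  have h1 : (((a+b).choose b : ℕ) : ℝ) * e^b ≤ (1+e)^(a+b) := by
    have hexp : (e+1)^(a+b) = ∑ i ∈ Finset.range (a+b+1),
        e^i * 1^(a+b-i) * ((a+b).choose i : ℝ) := add_pow e 1 (a+b)
    have hb : b ∈ Finset.range (a+b+1) := by simp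
    have hle := Finset.single_le_sum
      (f := fun i => e^i * 1^(a+b-i) * ((a+b).choose i : ℝ))
      (fun i _ => by positivity) hb
    rw [← hexp] at hle
    calc (((a+b).choose b : ℕ) : ℝ) * e^b = e^b * 1^(a+b-b) * ((a+b).choose b : ℝ) := by
          rw [one_pow]; ring
      _ ≤ (e+1)^(a+b) := hle
      _ = (1+e)^(a+b) := by rw [add_comm e 1]
  rw [div_pow, ← mul_div_assoc, le_div_iff₀ hpb, ← pow_add]
  exact h1

lemma choose_le_ennreal (a b : ℕ) {e : ℝ} (he : 0 < e) :
    (((a+b).choose b : ℕ) : ℝ≥0∞) ≤ (ENNReal.ofReal (1+e))^a * (ENNReal.ofReal ((1+e)/e))^b := by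
  rw [← ENNReal.ofReal_natCast, ← ENNReal.ofReal_pow (by positivity), ← ENNReal.ofReal_pow (by positivity),
    ← ENNReal.ofReal_mul (by positivity)]
  exact ENNReal.ofReal_le_ofReal (choose_le_real a b he)

lemma Xp_rpow (x : ℕ → ℝ≥0∞) (k : ℕ →₀ ℕ) {p : ℝ} (hp : 0 ≤ p) :
    (Xp x k)^p = Xp (fun j => x j ^ p) k := by
  rw [Xp, Xp, Finsupp.prod, Finsupp.prod, ← ENNReal.prod_rpow_of_nonneg hp]
  apply Finset.prod_congr rfl
  intro j _
  rw [← ENNReal.rpow_natCast (x j) (k j), ← ENNReal.rpow_mul, mul_comm,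
    ENNReal.rpow_mul, ENNReal.rpow_natCast]

lemma Xp_smul (c : ℝ≥0∞) (x : ℕ → ℝ≥0∞) (k : ℕ →₀ ℕ) :
    Xp (fun j => c * x j) k = c ^ deg k * Xp x k := by
  rw [Xp, Xp, Finsupp.prod, Finsupp.prod, deg_eq_sum, ← Finset.prod_pow_eq_pow_sum,
    ← Finset.prod_mul_distrib]
  exact Finset.prod_congr rfl fun j _ => mul_pow _ _ _

lemma Xp_congr {x y : ℕ → ℝ≥0∞} (k : ℕ →₀ ℕ) (h : ∀ j ∈ k.support, x j = y j) :
    Xp x k = Xp y k :=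
  Finset.prod_congr rfl fun j hj => by simp [h j hj]

lemma one_le_mlt (k : ℕ →₀ ℕ) : (1:ℝ≥0∞) ≤ (mlt k : ℝ≥0∞) :=
  Nat.one_le_cast.2 (mlt_pos k)

lemma mlt_rpow_le (k : ℕ →₀ ℕ) {p : ℝ} (hp1 : p ≤ 1) :
    ((mlt k : ℝ≥0∞))^p ≤ (mlt k : ℝ≥0∞) := by
  calc ((mlt k : ℝ≥0∞))^p ≤ ((mlt k : ℝ≥0∞))^(1:ℝ) :=
        ENNReal.rpow_le_rpow_of_exponent_le (one_le_mlt k) hp1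
    _ = (mlt k : ℝ≥0∞) := ENNReal.rpow_one _

lemma card_antidiag_le (N n : ℕ) : ((Finset.range N).finsuppAntidiag n).card ≤ (n+1)^N := by
  classical
  have h : ((Finset.range N).finsuppAntidiag n).card
      ≤ (Finset.univ : Finset (Fin N → Fin (n+1))).card := by
    apply Finset.card_le_card_of_injOn
      (fun (u : ℕ →₀ ℕ) => fun i : Fin N =>
        (⟨min (u i) n, Nat.lt_succ_of_le (min_le_right _ _)⟩ : Fin (n+1)))
      (fun u _ => Finset.mem_univ _)
    intro u hu u' hu' heq
    simp only [Finset.mem_coe, Finset.mem_finsuppAntidiag] at hu hu'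
    have hub : ∀ i, i < N → u i ≤ n := fun i hi => by
      rw [← hu.1]
      exact Finset.single_le_sum (f := fun i => u i) (fun _ _ => Nat.zero_le _)
        (Finset.mem_range.2 hi)
    have hub' : ∀ i, i < N → u' i ≤ n := fun i hi => by
      rw [← hu'.1]
      exact Finset.single_le_sum (f := fun i => u' i) (fun _ _ => Nat.zero_le _)
        (Finset.mem_range.2 hi)
    ext j
    by_cases hj : j < N
    · have hcf := congrFun heq ⟨j, hj⟩
      simp only [Fin.mk.injEq] at hcf
      rw [min_eq_left (hub j hj), min_eq_left (hub' j hj)] at hcf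
      exact hcf
    · have h1 : u j = 0 := by
        by_contra hcon
        exact hj (Finset.mem_range.1 (hu.2 (Finsupp.mem_support_iff.2 hcon)))
      have h2 : u' j = 0 := by
        by_contra hcon
        exact hj (Finset.mem_range.1 (hu'.2 (Finsupp.mem_support_iff.2 hcon)))
      rw [h1, h2]
  calc ((Finset.range N).finsuppAntidiag n).card
      ≤ (Finset.univ : Finset (Fin N → Fin (n+1))).card := h
    _ = (n+1)^N := by
      rw [Finset.card_univ, Fintype.card_fun, Fintype.card_fin, Fintype.card_fin]

lemma real_summable_poly_geom (N : ℕ) {t : ℝ} (h0 : 0 ≤ t) (h1 : t < 1) :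
    Summable (fun n : ℕ => ((n:ℝ)+1)^N * t^n) := by
  have hnorm : ‖t‖ < 1 := by rwa [Real.norm_eq_abs, abs_of_nonneg h0]
  have hsum : Summable (fun n : ℕ => ∑ i ∈ Finset.range (N+1),
      ((N.choose i : ℝ)) * ((n:ℝ)^i * t^n)) := by
    apply summable_sum
    intro i _
    exact (summable_pow_mul_geometric_of_norm_lt_one i hnorm).mul_left _
  apply hsum.congr
  intro n
  rw [add_pow, Finset.sum_mul]
  apply Finset.sum_congr rfl
  intro i _
  rw [one_pow]
  ring

lemma tsum_poly_geom_ne_top (N : ℕ) {w : ℝ≥0∞} (hw : w < 1) :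
    ∑' n : ℕ, ((n:ℝ≥0∞)+1)^N * w^n ≠ ⊤ := by
  have hwt : w ≠ ⊤ := (hw.trans_le le_top).ne
  lift w to ℝ≥0 using hwt
  have heq : ∀ n : ℕ, ((n:ℝ≥0∞)+1)^N * (w:ℝ≥0∞)^n
      = ((((n:ℝ≥0)+1)^N * w^n : ℝ≥0) : ℝ≥0∞) := by
    intro n; push_cast; ring
  rw [tsum_congr heq, ENNReal.tsum_coe_ne_top_iff_summable]
  rw [← NNReal.summable_coe]
  have hw1 : ((w:ℝ≥0):ℝ) < 1 := by exact_mod_cast ENNReal.coe_lt_one_iff.mp hw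
  apply (real_summable_poly_geom N w.coe_nonneg hw1).congr
  intro n
  push_cast
  ring


lemma cond_of_ite_ne_zero {c : Prop} [Decidable c] {x : ℝ≥0∞}
    (h : (if c then x else 0) ≠ 0) : c := by
  by_contra hc; exact h (if_neg hc)

lemma rpow_finset_sum_le {ι : Type*} (s : Finset ι) (f : ι → ℝ≥0∞) {p : ℝ}
    (hp0 : 0 < p) (hp1 : p ≤ 1) : (∑ i ∈ s, f i)^p ≤ ∑ i ∈ s, f i ^ p := by
  classical
  induction s using Finset.induction with
  | empty => simp [ENNReal.zero_rpow_of_pos hp0]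
  | @insert a s ha ih =>
    rw [Finset.sum_insert ha, Finset.sum_insert ha]
    exact le_trans (ENNReal.rpow_add_le_add_rpow _ _ hp0.le hp1) (add_le_add_right ih _)

lemma rpow_tsum_le {ι : Type*} (f : ι → ℝ≥0∞) {p : ℝ} (hp0 : 0 < p) (hp1 : p ≤ 1) :
    (∑' i, f i)^p ≤ ∑' i, f i ^ p := by
  have hX : ∀ s : Finset ι, (∑ i ∈ s, f i) ≤ (∑' i, f i ^ p)^(1/p) := by
    intro s
    rw [← ENNReal.rpow_le_rpow_iff hp0, ← ENNReal.rpow_mul,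
      one_div_mul_cancel hp0.ne', ENNReal.rpow_one]
    exact le_trans (rpow_finset_sum_le s f hp0 hp1)
      (ENNReal.summable.sum_le_tsum s (fun _ _ => zero_le))
  have h2 : (∑' i, f i) ≤ (∑' i, f i ^ p)^(1/p) := by
    rw [ENNReal.tsum_eq_iSup_sum]; exact iSup_le hX
  calc (∑' i, f i)^p ≤ ((∑' i, f i ^ p)^(1/p))^p := ENNReal.rpow_le_rpow h2 hp0.le
    _ = ∑' i, f i ^ p := by
      rw [← ENNReal.rpow_mul, one_div_mul_cancel hp0.ne', ENNReal.rpow_one]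

lemma tsum_supp_eq_prod_le (φ : ℕ → ℝ≥0∞) (T : Finset ℕ) :
    ∑' s : ℕ →₀ ℕ, (if s.support = T then ∏ j ∈ T, φ (s j) else 0)
      ≤ ∏ j ∈ T, ∑' m : ℕ, φ (m+1) := by
  classical
  induction T using Finset.induction with
  | empty =>
    rw [Finset.prod_empty, tsum_eq_single (0 : ℕ →₀ ℕ)]
    · simp
    · intro s hs
      rw [if_neg]
      rw [Finsupp.support_eq_empty]
      exact hs
  | @insert a T ha ih =>
    have key : ∑' s : ℕ →₀ ℕ, (if s.support = insert a T then ∏ j ∈ insert a T, φ (s j) else 0)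
        = ∑' ms : ℕ × (ℕ →₀ ℕ),
            (if ms.2.support = T then φ (ms.1 + 1) * ∏ j ∈ T, φ (ms.2 j) else 0) := by
      symm
      symm
      refine tsum_eq_tsum_of_ne_zero_bij
        (fun m => (m.1.2 : ℕ →₀ ℕ) + Finsupp.single a (m.1.1 + 1)) ?_ ?_ ?_
      · rintro ⟨⟨m1, s1⟩, h1⟩ ⟨⟨m2, s2⟩, h2⟩ heq
        simp only [Function.mem_support] at h1 h2
        have hs1 : s1.support = T := cond_of_ite_ne_zero h1
        have hs2 : s2.support = T := cond_of_ite_ne_zero h2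
        have hs1a : s1 a = 0 := by
          rw [← Finsupp.notMem_support_iff, hs1]; exact ha
        have hs2a : s2 a = 0 := by
          rw [← Finsupp.notMem_support_iff, hs2]; exact ha
        have heq' : s1 + Finsupp.single a (m1 + 1) = s2 + Finsupp.single a (m2 + 1) := heq
        have happ := DFunLike.congr_fun heq' a
        simp only [Finsupp.add_apply, Finsupp.single_eq_same, hs1a, hs2a, zero_add] at happ
        have hm : m1 = m2 := by omega
        subst hm
        have : s1 = s2 := add_right_cancel heq'
        simp [this]
      · intro s hf
        simp only [Function.mem_support] at hf
        have hsupp : s.support = insert a T := cond_of_ite_ne_zero hf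
        have hamem : a ∈ s.support := by rw [hsupp]; exact Finset.mem_insert_self a T
        have hsa : s a ≠ 0 := Finsupp.mem_support_iff.1 hamem
        have herase : s.erase a + Finsupp.single a (s a) = s := Finsupp.erase_add_single a s
        have hsupp' : (s.erase a).support = T := by
          rw [Finsupp.support_erase, hsupp, Finset.erase_insert ha]
        have hval : (if s.support = insert a T then ∏ j ∈ insert a T, φ (s j) else 0)
            = φ (s a) * ∏ j ∈ T, φ ((s.erase a) j) := by
          rw [if_pos hsupp, Finset.prod_insert ha]
          congr 1
          apply Finset.prod_congr rfl
          intro j hj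
          rw [Finsupp.erase_ne (by rintro rfl; exact ha hj)]
        have hg : (if (s.erase a).support = T then
            φ ((s a - 1) + 1) * ∏ j ∈ T, φ ((s.erase a) j) else 0) ≠ 0 := by
          rw [if_pos hsupp', Nat.sub_add_cancel (Nat.one_le_iff_ne_zero.2 hsa)]
          rw [hval] at hf
          exact hf
        refine Set.mem_range.mpr ⟨⟨(s a - 1, s.erase a), ?_⟩, ?_⟩
        · simpa only [Function.mem_support] using hg
        · show Finsupp.erase a s + Finsupp.single a (s a - 1 + 1) = s
          rw [Nat.sub_add_cancel (Nat.one_le_iff_ne_zero.2 hsa)]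
          exact herase
      · intro m
        beta_reduce
        have hmem := m.2
        simp only [Function.mem_support] at hmem
        have hT : ((m : ℕ × (ℕ →₀ ℕ)).2).support = T := cond_of_ite_ne_zero hmem
        have hsingle : (Finsupp.single a ((m : ℕ × (ℕ →₀ ℕ)).1 + 1)).support = {a} :=
          Finsupp.support_single_ne_zero a (Nat.succ_ne_zero _)
        have hdisj : Disjoint ((m : ℕ × (ℕ →₀ ℕ)).2).support
            (Finsupp.single a ((m : ℕ × (ℕ →₀ ℕ)).1 + 1)).support := by
          rw [hT, hsingle]
          simp [Finset.disjoint_singleton_right, ha]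
        have hsupp : ((m : ℕ × (ℕ →₀ ℕ)).2 + Finsupp.single a ((m : ℕ × (ℕ →₀ ℕ)).1 + 1)).support
            = insert a T := by
          rw [Finsupp.support_add_eq hdisj, hT, hsingle, Finset.union_comm, ← Finset.insert_eq]
        have hma : (m : ℕ × (ℕ →₀ ℕ)).2 a = 0 := by
          rw [← Finsupp.notMem_support_iff, hT]; exact ha
        rw [if_pos hsupp, if_pos hT, Finset.prod_insert ha]
        congr 1
        · rw [Finsupp.add_apply, Finsupp.single_eq_same, hma, zero_add]
        · apply Finset.prod_congr rfl
          intro j hj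
          rw [Finsupp.add_apply, Finsupp.single_eq_of_ne (by rintro rfl; exact ha hj), add_zero]
    rw [key, ENNReal.tsum_prod']
    have hinner : ∀ m : ℕ, (∑' s' : ℕ →₀ ℕ,
        (if s'.support = T then φ (m + 1) * ∏ j ∈ T, φ (s' j) else 0))
        = φ (m+1) * ∑' s' : ℕ →₀ ℕ, (if s'.support = T then ∏ j ∈ T, φ (s' j) else 0) := by
      intro m
      rw [← ENNReal.tsum_mul_left]
      exact tsum_congr fun s' => by rw [mul_ite, mul_zero]
    rw [tsum_congr hinner, ENNReal.tsum_mul_right, Finset.prod_insert ha]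
    exact mul_le_mul_right ih _


lemma tsum_shift_of_vanish {f : ℕ → ℝ≥0∞} (N : ℕ) (h : ∀ j < N, f j = 0) :
    ∑' j, f j = ∑' j, f (j + N) := by
  refine tsum_eq_tsum_of_ne_zero_bij (fun j => (j : ℕ) + N) ?_ ?_ ?_
  · intro a b hab
    have : (a : ℕ) + N = (b : ℕ) + N := hab
    exact Subtype.ext (by omega)
  · intro j hj
    simp only [Function.mem_support] at hj
    have hjN : N ≤ j := by
      by_contra h'
      exact hj (h j (by omega))
    have hg : f ((j - N) + N) ≠ 0 := by rw [Nat.sub_add_cancel hjN]; exact hj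
    exact Set.mem_range.mpr ⟨⟨j - N, by simpa only [Function.mem_support] using hg⟩,
      by show (j - N) + N = j; omega⟩
  · intro m; rfl

lemma partA {p : ℝ} (hp0 : 0 < p) (hp1 : p ≤ 1) (σ : ℕ → ℝ≥0∞)
    (hq : ∑' j, σ j < 1) (hfin : ∑' j, σ j ^ p ≠ ⊤) :
    ∑' k : ℕ →₀ ℕ, (MF σ k) ^ p ≠ ⊤ := by
  classical
  have hqt : (∑' j, σ j) ≠ ⊤ := (hq.trans_le le_top).ne
  set qR := (∑' j, σ j).toReal with hqRdef
  have hofq : ENNReal.ofReal qR = ∑' j, σ j := ENNReal.ofReal_toReal hqt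
  have hqR0 : 0 ≤ qR := ENNReal.toReal_nonneg
  have hqR1 : qR < 1 := by
    have := (ENNReal.toReal_lt_toReal hqt ENNReal.one_ne_top).2 hq
    simpa using this
  set eR := (1 - qR)/2 with heRdef
  have heR0 : 0 < eR := by rw [heRdef]; linarith
  have hkey : (1 + eR) * qR < 1 := by nlinarith
  set y := ENNReal.ofReal (1 + eR) with hydef
  set z := ENNReal.ofReal ((1 + eR)/eR) with hzdef
  have hzt : z ≠ ⊤ := ENNReal.ofReal_ne_top
  have hzpos : 0 < z := ENNReal.ofReal_pos.2 (by positivity)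
  have hzp_ne_top : z^p ≠ ⊤ := ENNReal.rpow_ne_top_of_nonneg hp0.le hzt
  have hzp0 : z^p ≠ 0 := (ENNReal.rpow_pos hzpos hzt).ne'
  obtain ⟨N, hN⟩ : ∃ N, z^p * ∑' j, (σ (j + N))^p < 1 := by
    have htend := ENNReal.tendsto_sum_nat_add (fun j => σ j ^ p) hfin
    have hev := htend.eventually_lt_const (ENNReal.inv_pos.2 hzp_ne_top)
    obtain ⟨N, hN'⟩ := hev.exists
    refine ⟨N, ?_⟩
    calc z^p * ∑' j, σ (j + N)^p < z^p * (z^p)⁻¹ :=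
          (ENNReal.mul_lt_mul_iff_right hzp0 hzp_ne_top).2 hN'
      _ = 1 := ENNReal.mul_inv_cancel hzp0 hzp_ne_top
  set τ : ℕ → ℝ≥0∞ := fun j => if j < N then y * σ j else 0 with hτdef
  set ρ : ℕ → ℝ≥0∞ := fun j => if j < N then 0 else z * σ j with hρdef
  have hpoint : ∀ k : ℕ →₀ ℕ,
      (MF σ k)^p ≤ (MF τ (k.filter (fun j => j < N)))^p
        * (MF ρ (k.filter (fun j => ¬ j < N)))^p := by
    intro k
    have hk : k.filter (fun j => j < N) + k.filter (fun j => ¬ j < N) = k :=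
      Finsupp.filter_pos_add_filter_neg k _
    set u := k.filter (fun j => j < N) with hu
    set v := k.filter (fun j => ¬ j < N) with hv
    have hd : Disjoint u.support v.support := by
      rw [hu, hv, Finsupp.support_filter, Finsupp.support_filter]
      exact Finset.disjoint_filter_filter_not _ _ _
    have husupp : ∀ j ∈ u.support, τ j = y * σ j := by
      intro j hj
      rw [hu, Finsupp.support_filter, Finset.mem_filter] at hj
      show (if j < N then y * σ j else 0) = y * σ j
      exact if_pos hj.2
    have hvsupp : ∀ j ∈ v.support, ρ j = z * σ j := by
      intro j hj
      rw [hv, Finsupp.support_filter, Finset.mem_filter] at hj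
      show (if j < N then 0 else z * σ j) = z * σ j
      exact if_neg hj.2
    have hXu : Xp τ u = y ^ deg u * Xp σ u :=
      (Xp_congr u husupp).trans (Xp_smul y σ u)
    have hXv : Xp ρ v = z ^ deg v * Xp σ v :=
      (Xp_congr v hvsupp).trans (Xp_smul z σ v)
    have hch : (((deg u + deg v).choose (deg v) : ℕ) : ℝ≥0∞) ≤ y ^ deg u * z ^ deg v := by
      rw [hydef, hzdef]
      exact choose_le_ennreal (deg u) (deg v) heR0
    have hMF : MF σ k ≤ MF τ u * MF ρ v := by
      conv_lhs => rw [← hk]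
      rw [MF, Xp_add, mlt_add_of_disjoint hd, MF, MF, hXu, hXv]
      push_cast
      calc Xp σ u * Xp σ v * ((((deg u + deg v).choose (deg v) : ℕ) : ℝ≥0∞)
              * (mlt u : ℝ≥0∞) * (mlt v : ℝ≥0∞))
          ≤ Xp σ u * Xp σ v * ((y ^ deg u * z ^ deg v)
              * (mlt u : ℝ≥0∞) * (mlt v : ℝ≥0∞)) := by gcongr
        _ = y ^ deg u * Xp σ u * (mlt u : ℝ≥0∞) * (z ^ deg v * Xp σ v * (mlt v : ℝ≥0∞)) := by
            ring
    calc (MF σ k)^p ≤ (MF τ u * MF ρ v)^p := ENNReal.rpow_le_rpow hMF hp0.le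
      _ = (MF τ u)^p * (MF ρ v)^p := ENNReal.mul_rpow_of_nonneg _ _ hp0.le
  have hinj : Function.Injective (fun k : ℕ →₀ ℕ =>
      ((k.filter (fun j => j < N), k.filter (fun j => ¬ j < N)) : (ℕ →₀ ℕ) × (ℕ →₀ ℕ))) := by
    intro k k' h
    simp only [Prod.mk.injEq] at h
    rw [← Finsupp.filter_pos_add_filter_neg k (fun j => j < N),
      ← Finsupp.filter_pos_add_filter_neg k' (fun j => j < N), h.1, h.2]
  have hsplit : ∑' k : ℕ →₀ ℕ, (MF σ k)^p
      ≤ (∑' u : ℕ →₀ ℕ, (MF τ u)^p) * (∑' v : ℕ →₀ ℕ, (MF ρ v)^p) := by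
    calc ∑' k : ℕ →₀ ℕ, (MF σ k)^p
        ≤ ∑' k : ℕ →₀ ℕ, (MF τ (k.filter (fun j => j < N)))^p
            * (MF ρ (k.filter (fun j => ¬ j < N)))^p := ENNReal.tsum_le_tsum hpoint
      _ ≤ ∑' uv : (ℕ →₀ ℕ) × (ℕ →₀ ℕ), (MF τ uv.1)^p * (MF ρ uv.2)^p :=
          ENNReal.tsum_comp_le_tsum_of_injective hinj _
      _ = (∑' u : ℕ →₀ ℕ, (MF τ u)^p) * (∑' v : ℕ →₀ ℕ, (MF ρ v)^p) := by
          rw [ENNReal.tsum_prod']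
          calc ∑' (u : ℕ →₀ ℕ) (v : ℕ →₀ ℕ), (MF τ u)^p * (MF ρ v)^p
              = ∑' u : ℕ →₀ ℕ, (MF τ u)^p * ∑' v : ℕ →₀ ℕ, (MF ρ v)^p :=
                tsum_congr fun u => ENNReal.tsum_mul_left
            _ = _ := ENNReal.tsum_mul_right
  have hρtail : ∑' j, ρ j ^ p < 1 := by
    have hvan : ∀ j < N, ρ j ^ p = 0 := by
      intro j hj
      show (if j < N then 0 else z * σ j)^p = 0
      rw [if_pos hj, ENNReal.zero_rpow_of_pos hp0]
    rw [tsum_shift_of_vanish N hvan]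
    have hre : ∀ j : ℕ, ρ (j + N) ^ p = z^p * σ (j + N)^p := by
      intro j
      show (if j + N < N then 0 else z * σ (j + N))^p = _
      rw [if_neg (by omega), ENNReal.mul_rpow_of_nonneg _ _ hp0.le]
    rw [tsum_congr hre, ENNReal.tsum_mul_left]
    exact hN
  have hFfin : (∑' v : ℕ →₀ ℕ, (MF ρ v)^p) ≠ ⊤ := by
    have hle : ∀ v : ℕ →₀ ℕ, (MF ρ v)^p ≤ MF (fun j => ρ j ^ p) v := by
      intro v
      rw [MF, MF, ENNReal.mul_rpow_of_nonneg _ _ hp0.le, Xp_rpow ρ v hp0.le]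
      exact mul_le_mul_right (mlt_rpow_le v hp1) _
    refine ne_top_of_le_ne_top ?_ (ENNReal.tsum_le_tsum hle)
    rw [tsum_MF, ENNReal.tsum_geometric, Ne, ENNReal.inv_eq_top, tsub_eq_zero_iff_le]
    exact not_le_of_gt hρtail
  have hτ1 : ∑' j, τ j < 1 := by
    have hle : ∀ j, τ j ≤ y * σ j := by
      intro j
      show (if j < N then y * σ j else 0) ≤ y * σ j
      split_ifs
      · exact le_rfl
      · exact zero_le
    calc ∑' j, τ j ≤ ∑' j, y * σ j := ENNReal.tsum_le_tsum hle
      _ = y * ∑' j, σ j := ENNReal.tsum_mul_left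
      _ = ENNReal.ofReal ((1+eR) * qR) := by
          rw [hydef, ← hofq, ← ENNReal.ofReal_mul (by positivity)]
      _ < 1 := ENNReal.ofReal_lt_one.2 hkey
  have hw : (∑' j, τ j)^p < 1 := ENNReal.rpow_lt_one hτ1 hp0
  have hEfin : (∑' u : ℕ →₀ ℕ, (MF τ u)^p) ≠ ⊤ := by
    rw [tsum_deg_ite (fun u => (MF τ u)^p)]
    have hslice : ∀ n : ℕ, (∑' u : ℕ →₀ ℕ, if deg u = n then (MF τ u)^p else 0)
        ≤ ((n:ℝ≥0∞)+1)^N * ((∑' j, τ j)^p)^n := by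
      intro n
      have hterm : ∀ u : ℕ →₀ ℕ, (if deg u = n then (MF τ u)^p else 0)
          ≤ (if u ∈ (Finset.range N).finsuppAntidiag n then ((∑' j, τ j)^p)^n else 0) := by
        intro u
        by_cases hdeg : deg u = n
        · rw [if_pos hdeg]
          by_cases hzero : MF τ u = 0
          · rw [hzero, ENNReal.zero_rpow_of_pos hp0]
            exact zero_le
          · have hsupp : u.support ⊆ Finset.range N := by
              intro j hj
              rw [Finset.mem_range]
              by_contra hjN
              apply hzero
              rw [MF]
              apply mul_eq_zero_of_left
              rw [Xp, Finsupp.prod]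
              apply Finset.prod_eq_zero hj
              show τ j ^ (u j) = 0
              have hτ0 : τ j = 0 := by
                show (if j < N then y * σ j else 0) = 0
                exact if_neg hjN
              rw [hτ0]
              exact zero_pow (Finsupp.mem_support_iff.1 hj)
            have hmem : u ∈ (Finset.range N).finsuppAntidiag n := by
              rw [Finset.mem_finsuppAntidiag]
              refine ⟨?_, hsupp⟩
              rw [← Finset.sum_subset hsupp (fun i _ hi => Finsupp.notMem_support_iff.1 hi)]
              rw [← deg_eq_sum, hdeg]
            rw [if_pos hmem]
            have h1 : MF τ u ≤ (∑' j, τ j)^n := by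
              have hle1 := ENNReal.le_tsum
                (f := fun w : ℕ →₀ ℕ => if deg w = n then MF τ w else 0) u
              rw [tsum_slice] at hle1
              rw [if_pos hdeg] at hle1
              exact hle1
            calc (MF τ u)^p ≤ ((∑' j, τ j)^n)^p := ENNReal.rpow_le_rpow h1 hp0.le
              _ = ((∑' j, τ j)^p)^n := by
                rw [← ENNReal.rpow_natCast _ n, ← ENNReal.rpow_mul, mul_comm,
                  ENNReal.rpow_mul, ENNReal.rpow_natCast]
        · rw [if_neg hdeg]
          exact zero_le
      calc (∑' u : ℕ →₀ ℕ, if deg u = n then (MF τ u)^p else 0)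
          ≤ ∑' u : ℕ →₀ ℕ, (if u ∈ (Finset.range N).finsuppAntidiag n
              then ((∑' j, τ j)^p)^n else 0) := ENNReal.tsum_le_tsum hterm
        _ = ∑ u ∈ (Finset.range N).finsuppAntidiag n,
              (if u ∈ (Finset.range N).finsuppAntidiag n then ((∑' j, τ j)^p)^n else 0) :=
            tsum_eq_sum (fun u hu => if_neg hu)
        _ ≤ ((n:ℝ≥0∞)+1)^N * ((∑' j, τ j)^p)^n := by
            rw [Finset.sum_congr rfl (fun u hu => if_pos hu), Finset.sum_const, nsmul_eq_mul]
            apply mul_le_mul_left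
            calc ((((Finset.range N).finsuppAntidiag n).card : ℕ) : ℝ≥0∞)
                ≤ (((n+1)^N : ℕ) : ℝ≥0∞) := Nat.cast_le.2 (card_antidiag_le N n)
              _ = ((n:ℝ≥0∞)+1)^N := by push_cast; ring
    exact ne_top_of_le_ne_top (tsum_poly_geom_ne_top N hw) (ENNReal.tsum_le_tsum hslice)
  exact ne_top_of_le_ne_top (ENNReal.mul_ne_top hEfin hFfin) hsplit


lemma ite_rpow {c : Prop} [Decidable c] (x : ℝ≥0∞) {p : ℝ} (hp : 0 < p) :
    (if c then x else 0)^p = if c then x^p else 0 := by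
  split_ifs
  · rfl
  · exact ENNReal.zero_rpow_of_pos hp

lemma pow_rpow_comm (x : ℝ≥0∞) (n : ℕ) (p : ℝ) : (x^n)^p = (x^p)^n := by
  rw [← ENNReal.rpow_natCast x n, ← ENNReal.rpow_mul, mul_comm, ENNReal.rpow_mul,
    ENNReal.rpow_natCast]

lemma card_le_deg (k : ℕ →₀ ℕ) : k.support.card ≤ deg k := by
  rw [deg_eq_sum, Finset.card_eq_sum_ones]
  exact Finset.sum_le_sum fun j hj => Nat.one_le_iff_ne_zero.2 (Finsupp.mem_support_iff.1 hj)

lemma monomialFactor_eq (c : ℕ → ℝ) (k : ℕ →₀ ℕ) :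
    monomialFactor c k = (∏ j ∈ k.support, c j ^ k j) * (mlt k : ℝ) := by
  rw [monomialFactor]
  have hP : (0:ℝ) < ∏ j ∈ k.support, ((k j).factorial : ℝ) :=
    Finset.prod_pos fun j _ => by exact_mod_cast Nat.factorial_pos (k j)
  have hcast : (((k.sum fun _ n => n).factorial : ℕ) : ℝ)
      = (∏ j ∈ k.support, ((k j).factorial : ℝ)) * (mlt k : ℝ) := by
    have hspec := mlt_spec k
    rw [show (k.sum fun _ n => n) = deg k from rfl, ← hspec]
    push_cast
    ring
  rw [hcast]
  field_simp

lemma ofReal_monomialFactor (c : ℕ → ℝ) (hc : ∀ j, 0 ≤ c j) (k : ℕ →₀ ℕ) :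
    ENNReal.ofReal (monomialFactor c k) = MF (fun j => ENNReal.ofReal (c j)) k := by
  rw [monomialFactor_eq,
    ENNReal.ofReal_mul (Finset.prod_nonneg fun j _ => pow_nonneg (hc j) _),
    ENNReal.ofReal_prod_of_nonneg (fun j _ => pow_nonneg (hc j) _), MF, Xp, Finsupp.prod,
    ENNReal.ofReal_natCast]
  congr 1
  exact Finset.prod_congr rfl fun j _ => ENNReal.ofReal_pow (hc j) _

end StmtAux


/-- Let `0 < p ≤ 1`, `θ' ≥ 0`, `λ ≥ 0`, `r ∈ ℕ` with `p(r-θ') > 1`, and set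
`C_{p,θ'} := ∑_{k≥1} k^{-p(r-θ')}`, `C_{θ',λ} := sup_{k≥1} (1+λk)^{θ'} k^{-θ'}`. Let
`C₁, C₂ > 0`, and let `(b_j)` be nonnegative with `∑ b_j^p < ∞` and `K ∑ b_j < 1`, where
`K := e ⬝ max{1, C_{θ',λ} C₂ C_{p,θ'}^{1/p}}`. For `s ∈ 𝔽` set
`β_s := C₁ C₂^{|supp s|} s^{-r} ∑_{supp k = supp s, |k|_∞ ≤ 2r} (e b)^k |k|_1!/k!`. Then
`∑_s (p_s(θ',λ) β_s)^p ≤ C₁^p ∑_{k∈𝔽} ((K b)^k |k|_1!/k!)^p < ∞`; in particular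
`(p_s(θ',λ) β_s)_s ∈ ℓ_p(𝔽)`. -/
theorem summable_weighted_beta_b
    (p θ' lam : ℝ) (hp0 : 0 < p) (hp1 : p ≤ 1) (hθ' : 0 ≤ θ') (hlam : 0 ≤ lam)
    (r : ℕ) (hr : 1 < p * ((r : ℝ) - θ'))
    (Cpθ : ℝ) (hCpθ : Cpθ = ∑' k : ℕ, ((k : ℝ) + 1) ^ (-(p * ((r : ℝ) - θ'))))
    (Cθlam : ℝ)
    (hCθlam : Cθlam = ⨆ k : ℕ, (1 + lam * ((k : ℝ) + 1)) ^ θ' * ((k : ℝ) + 1) ^ (-θ'))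
    (C₁ C₂ : ℝ) (hC₁ : 0 < C₁) (hC₂ : 0 < C₂)
    (b : ℕ → ℝ) (hb : ∀ j, 0 ≤ b j) (hbp : Summable fun j => b j ^ p)
    (K : ℝ) (hK : K = Real.exp 1 * max 1 (Cθlam * C₂ * Cpθ ^ (1 / p)))
    (hKb : K * ∑' j : ℕ, b j < 1)
    (β : (ℕ →₀ ℕ) → ℝ)
    (hβ : ∀ s : ℕ →₀ ℕ, β s =
      C₁ * C₂ ^ s.support.card * (∏ j ∈ s.support, ((s j : ℝ) ^ r)⁻¹) *
        ∑' k : ℕ →₀ ℕ,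
          if k.support = s.support ∧ ∀ j ∈ k.support, k j ≤ 2 * r then
            monomialFactor (fun j => Real.exp 1 * b j) k
          else 0) :
    Summable (fun s : ℕ →₀ ℕ => (pweight θ' lam s * β s) ^ p) ∧
    Summable (fun k : ℕ →₀ ℕ => monomialFactor (fun j => K * b j) k ^ p) ∧
    ∑' s : ℕ →₀ ℕ, (pweight θ' lam s * β s) ^ p
      ≤ C₁ ^ p * ∑' k : ℕ →₀ ℕ, monomialFactor (fun j => K * b j) k ^ p := by
  classical
  have hexp0 : (0:ℝ) < Real.exp 1 := Real.exp_pos 1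
  have hbnn : ∀ j, 0 ≤ Real.exp 1 * b j := fun j => mul_nonneg hexp0.le (hb j)
  have hmax1 : (1:ℝ) ≤ max 1 (Cθlam * C₂ * Cpθ ^ (1/p)) := le_max_left _ _
  have hmax0 : (0:ℝ) < max 1 (Cθlam * C₂ * Cpθ ^ (1/p)) := lt_of_lt_of_le one_pos hmax1
  have hKpos : 0 < K := by rw [hK]; exact mul_pos hexp0 hmax0
  have hKb0 : ∀ j, 0 ≤ K * b j := fun j => mul_nonneg hKpos.le (hb j)
  -- summability of b
  have hbsum : Summable b := by
    have htend : Filter.Tendsto (fun j => b j ^ p) Filter.atTop (nhds 0) :=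
      hbp.tendsto_atTop_zero
    have hev := htend.eventually_lt_const one_pos
    obtain ⟨N, hN⟩ := Filter.eventually_atTop.1 hev
    rw [← summable_nat_add_iff N]
    apply Summable.of_nonneg_of_le (fun j => hb _) (fun j => ?_)
      ((summable_nat_add_iff N).2 hbp)
    have h1 : b (j+N) ^ p < 1 := hN _ (Nat.le_add_left N j)
    rcases eq_or_lt_of_le (hb (j+N)) with h0 | h0
    · rw [← h0]
      exact Real.rpow_nonneg le_rfl p
    · have hble : b (j+N) ≤ 1 := by
        by_contra hgt
        push_neg at hgt
        have := Real.one_le_rpow hgt.le hp0.le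
        linarith
      calc b (j+N) = b (j+N) ^ (1:ℝ) := (Real.rpow_one _).symm
        _ ≤ b (j+N) ^ p := Real.rpow_le_rpow_of_exponent_ge h0 hble hp1
  -- Cpθ facts
  have hsum_a : Summable (fun m : ℕ => ((m:ℝ)+1) ^ (-(p * ((r:ℝ) - θ')))) := by
    have h1 : Summable (fun n : ℕ => (n:ℝ) ^ (-(p * ((r:ℝ) - θ')))) :=
      Real.summable_nat_rpow.2 (by linarith)
    apply ((summable_nat_add_iff 1).2 h1).congr
    intro m
    norm_num
  have hCpθ0 : 0 ≤ Cpθ := by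
    rw [hCpθ]
    exact tsum_nonneg fun m => Real.rpow_nonneg (by positivity) _
  -- Cθlam facts
  have hbdd : BddAbove (Set.range fun k : ℕ =>
      (1 + lam * ((k:ℝ)+1)) ^ θ' * ((k:ℝ)+1) ^ (-θ')) := by
    refine ⟨(1+lam) ^ θ', ?_⟩
    rintro x ⟨k, rfl⟩
    have hk1 : (1:ℝ) ≤ (k:ℝ)+1 := by
      have := Nat.cast_nonneg (α:=ℝ) k
      linarith
    have h2 : (0:ℝ) < (k:ℝ)+1 := by positivity
    have h1 : 1 + lam * ((k:ℝ)+1) ≤ (1+lam) * ((k:ℝ)+1) := by nlinarith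
    calc (1 + lam * ((k:ℝ)+1)) ^ θ' * ((k:ℝ)+1) ^ (-θ')
        ≤ ((1+lam) * ((k:ℝ)+1)) ^ θ' * ((k:ℝ)+1) ^ (-θ') :=
          mul_le_mul_of_nonneg_right
            (Real.rpow_le_rpow (by positivity) h1 hθ') (Real.rpow_nonneg h2.le _)
      _ = (1+lam) ^ θ' * (((k:ℝ)+1) ^ θ' * ((k:ℝ)+1) ^ (-θ')) := by
          rw [Real.mul_rpow (by positivity) h2.le]; ring
      _ = (1+lam) ^ θ' := by
          rw [← Real.rpow_add h2, add_neg_cancel, Real.rpow_zero, mul_one]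
  have hCθ_ge : ∀ k : ℕ, (1 + lam * ((k:ℝ)+1)) ^ θ' * ((k:ℝ)+1) ^ (-θ') ≤ Cθlam := by
    intro k
    rw [hCθlam]
    exact le_ciSup hbdd k
  have hCθ0 : 0 ≤ Cθlam := le_trans (by positivity) (hCθ_ge 0)
  -- Φ and the per-term bound
  set Φ : ℕ → ℝ≥0∞ := fun n => ENNReal.ofReal ((1 + lam * (n:ℝ)) ^ θ' * (((n:ℝ)) ^ r)⁻¹)
    with hΦdef
  have hphi : ∀ m : ℕ, (Φ (m+1)) ^ p
      ≤ ENNReal.ofReal (Cθlam ^ p * ((m:ℝ)+1) ^ (-(p * ((r:ℝ) - θ')))) := by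
    intro m
    have hm1 : (0:ℝ) < (m:ℝ)+1 := by positivity
    have hXnn : (0:ℝ) ≤ (1 + lam * ((m:ℝ)+1)) ^ θ' * (((m:ℝ)+1) ^ r)⁻¹ := by positivity
    have hΦm : Φ (m+1) = ENNReal.ofReal ((1 + lam * ((m:ℝ)+1)) ^ θ' * (((m:ℝ)+1) ^ r)⁻¹) := by
      rw [hΦdef]
      norm_num
    rw [hΦm, ENNReal.ofReal_rpow_of_nonneg hXnn hp0.le]
    apply ENNReal.ofReal_le_ofReal
    have h4 : (0:ℝ) < ((m:ℝ)+1) ^ θ' := Real.rpow_pos_of_pos hm1 θ'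
    have h1 : (1 + lam * ((m:ℝ)+1)) ^ θ' ≤ Cθlam * ((m:ℝ)+1) ^ θ' := by
      have h2 := hCθ_ge m
      rw [Real.rpow_neg hm1.le] at h2
      calc (1 + lam * ((m:ℝ)+1)) ^ θ'
          = (1 + lam * ((m:ℝ)+1)) ^ θ' * (((m:ℝ)+1) ^ θ')⁻¹ * ((m:ℝ)+1) ^ θ' := by
            field_simp
        _ ≤ Cθlam * ((m:ℝ)+1) ^ θ' := mul_le_mul_of_nonneg_right h2 h4.le
    have hbase : (1 + lam * ((m:ℝ)+1)) ^ θ' * (((m:ℝ)+1) ^ r)⁻¹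
        ≤ Cθlam * ((m:ℝ)+1) ^ (θ' - (r:ℝ)) := by
      have hr1 : ((((m:ℝ)+1)) ^ r)⁻¹ = ((m:ℝ)+1) ^ (-(r:ℝ)) := by
        rw [Real.rpow_neg hm1.le, Real.rpow_natCast]
      rw [hr1]
      calc (1 + lam * ((m:ℝ)+1)) ^ θ' * ((m:ℝ)+1) ^ (-(r:ℝ))
          ≤ (Cθlam * ((m:ℝ)+1) ^ θ') * ((m:ℝ)+1) ^ (-(r:ℝ)) :=
            mul_le_mul_of_nonneg_right h1 (Real.rpow_nonneg hm1.le _)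
        _ = Cθlam * ((m:ℝ)+1) ^ (θ' - (r:ℝ)) := by
            rw [mul_assoc, ← Real.rpow_add hm1, ← sub_eq_add_neg]
    calc ((1 + lam * ((m:ℝ)+1)) ^ θ' * (((m:ℝ)+1) ^ r)⁻¹) ^ p
        ≤ (Cθlam * ((m:ℝ)+1) ^ (θ' - (r:ℝ))) ^ p :=
          Real.rpow_le_rpow hXnn hbase hp0.le
      _ = Cθlam ^ p * ((m:ℝ)+1) ^ (-(p * ((r:ℝ) - θ'))) := by
          rw [Real.mul_rpow hCθ0 (Real.rpow_nonneg hm1.le _),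
            ← Real.rpow_mul hm1.le]
          congr 2
          ring
  have hDsum : ∑' m : ℕ, (Φ (m+1)) ^ p ≤ ENNReal.ofReal (Cθlam ^ p * Cpθ) := by
    calc ∑' m : ℕ, (Φ (m+1)) ^ p
        ≤ ∑' m : ℕ, ENNReal.ofReal (Cθlam ^ p * ((m:ℝ)+1) ^ (-(p * ((r:ℝ) - θ')))) :=
          ENNReal.tsum_le_tsum hphi
      _ = ENNReal.ofReal (∑' m : ℕ, Cθlam ^ p * ((m:ℝ)+1) ^ (-(p * ((r:ℝ) - θ')))) :=
          (ENNReal.ofReal_tsum_of_nonneg (fun m => by positivity) (hsum_a.mul_left _)).symm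
      _ = ENNReal.ofReal (Cθlam ^ p * Cpθ) := by
          rw [tsum_mul_left, hCpθ]
  -- ENNReal versions of the sequences
  set Kb : ℕ → ℝ≥0∞ := fun j => ENNReal.ofReal (K * b j) with hKbdef
  set Eb : ℕ → ℝ≥0∞ := fun j => ENNReal.ofReal (Real.exp 1 * b j) with hEbdef
  -- Part A : the dominating series is finite
  have hq : ∑' j, Kb j < 1 := by
    rw [hKbdef, ← ENNReal.ofReal_tsum_of_nonneg hKb0 (hbsum.mul_left K)]
    apply ENNReal.ofReal_lt_one.2
    rw [tsum_mul_left]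
    exact hKb
  have hKp_summ : Summable (fun j => (K * b j) ^ p) := by
    apply (hbp.mul_left (K ^ p)).congr
    intro j
    rw [Real.mul_rpow hKpos.le (hb j)]
  have hfinp : ∑' j, Kb j ^ p ≠ ⊤ := by
    have heq : ∀ j, Kb j ^ p = ENNReal.ofReal ((K * b j) ^ p) := fun j =>
      ENNReal.ofReal_rpow_of_nonneg (hKb0 j) hp0.le
    rw [tsum_congr heq,
      ← ENNReal.ofReal_tsum_of_nonneg (fun j => Real.rpow_nonneg (hKb0 j) p) hKp_summ]
    exact ENNReal.ofReal_ne_top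
  have hA : ∑' k : ℕ →₀ ℕ, (MF Kb k) ^ p ≠ ⊤ := partA hp0 hp1 Kb hq hfinp
  -- second conjunct
  have hmonoKnn : ∀ k, 0 ≤ monomialFactor (fun j => K * b j) k := by
    intro k
    rw [monomialFactor_eq]
    exact mul_nonneg (Finset.prod_nonneg fun j _ => pow_nonneg (hKb0 j) _) (Nat.cast_nonneg _)
  have hofKb : ∀ k, ENNReal.ofReal (monomialFactor (fun j => K * b j) k) = MF Kb k :=
    fun k => ofReal_monomialFactor _ hKb0 k
  have hMFKb_eq : ∀ k, (MF Kb k) ^ p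
      = ENNReal.ofReal (monomialFactor (fun j => K * b j) k ^ p) := by
    intro k
    rw [← hofKb k, ENNReal.ofReal_rpow_of_nonneg (hmonoKnn k) hp0.le]
  have hsum2 : Summable (fun k : ℕ →₀ ℕ => monomialFactor (fun j => K * b j) k ^ p) := by
    apply (ENNReal.summable_toReal hA).congr
    intro k
    rw [hMFKb_eq k, ENNReal.toReal_ofReal (Real.rpow_nonneg (hmonoKnn k) p)]
  -- the inner sum of β is a finite sum
  have hinnerFin : ∀ s : ℕ →₀ ℕ, ∀ k : ℕ →₀ ℕ,
      k ∉ (Finset.range (2*r*s.support.card + 1)).biUnion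
        (fun m => s.support.finsuppAntidiag m) →
      (if k.support = s.support ∧ ∀ j ∈ k.support, k j ≤ 2 * r then
        monomialFactor (fun j => Real.exp 1 * b j) k else 0) = 0 := by
    intro s k hk
    rw [if_neg]
    rintro ⟨h1, h2⟩
    apply hk
    rw [Finset.mem_biUnion]
    refine ⟨s.support.sum k, ?_, ?_⟩
    · rw [Finset.mem_range]
      have hle : s.support.sum ⇑k ≤ s.support.card • (2*r) :=
        Finset.sum_le_card_nsmul _ _ _ (fun j hj => h2 j (h1.symm ▸ hj))
      rw [smul_eq_mul] at hle
      have : s.support.card * (2*r) = 2*r*s.support.card := by ring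
      omega
    · rw [Finset.mem_finsuppAntidiag]
      exact ⟨rfl, le_of_eq h1⟩
  have hTnn : ∀ s : ℕ →₀ ℕ, ∀ k : ℕ →₀ ℕ,
      0 ≤ (if k.support = s.support ∧ ∀ j ∈ k.support, k j ≤ 2 * r then
        monomialFactor (fun j => Real.exp 1 * b j) k else 0) := by
    intro s k
    split_ifs with h
    · rw [monomialFactor_eq]
      exact mul_nonneg (Finset.prod_nonneg fun j _ => pow_nonneg (hbnn j) _) (Nat.cast_nonneg _)
    · exact le_rfl
  have hTsummable : ∀ s : ℕ →₀ ℕ, Summable (fun k : ℕ →₀ ℕ =>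
      if k.support = s.support ∧ ∀ j ∈ k.support, k j ≤ 2 * r then
        monomialFactor (fun j => Real.exp 1 * b j) k else 0) := fun s =>
    summable_of_ne_finset_zero (hinnerFin s)
  have hinner : ∀ s : ℕ →₀ ℕ,
      ENNReal.ofReal (∑' k : ℕ →₀ ℕ, if k.support = s.support ∧ ∀ j ∈ k.support, k j ≤ 2*r
          then monomialFactor (fun j => Real.exp 1 * b j) k else 0)
      = ∑' k : ℕ →₀ ℕ, (if k.support = s.support ∧ ∀ j ∈ k.support, k j ≤ 2*r
          then MF Eb k else 0) := by
    intro s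
    rw [ENNReal.ofReal_tsum_of_nonneg (hTnn s) (hTsummable s)]
    apply tsum_congr
    intro k
    split_ifs with h
    · exact ofReal_monomialFactor _ hbnn k
    · exact ENNReal.ofReal_zero
  -- nonnegativity
  have hβnn : ∀ s, 0 ≤ β s := by
    intro s
    rw [hβ s]
    have h1 : 0 ≤ ∑' k : ℕ →₀ ℕ, (if k.support = s.support ∧ ∀ j ∈ k.support, k j ≤ 2*r
        then monomialFactor (fun j => Real.exp 1 * b j) k else 0) :=
      tsum_nonneg (hTnn s)
    have h2 : (0:ℝ) ≤ ∏ j ∈ s.support, ((s j : ℝ) ^ r)⁻¹ :=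
      Finset.prod_nonneg fun j _ => by positivity
    have h3 : (0:ℝ) ≤ C₁ * C₂ ^ s.support.card := by positivity
    exact mul_nonneg (mul_nonneg h3 h2) h1
  have hpwnn : ∀ s, 0 ≤ pweight θ' lam s := by
    intro s
    apply Finset.prod_nonneg
    intro j _
    have : (0:ℝ) ≤ lam * (s j : ℝ) := mul_nonneg hlam (Nat.cast_nonneg _)
    exact Real.rpow_nonneg (by linarith) _
  -- decomposition of ofReal β
  have hofβ : ∀ s : ℕ →₀ ℕ, ENNReal.ofReal (β s)
      = ENNReal.ofReal C₁ * ENNReal.ofReal C₂ ^ s.support.card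
          * ENNReal.ofReal (∏ j ∈ s.support, ((s j : ℝ) ^ r)⁻¹)
          * ∑' k : ℕ →₀ ℕ, (if k.support = s.support ∧ ∀ j ∈ k.support, k j ≤ 2*r
              then MF Eb k else 0) := by
    intro s
    have h2 : (0:ℝ) ≤ ∏ j ∈ s.support, ((s j : ℝ) ^ r)⁻¹ :=
      Finset.prod_nonneg fun j _ => by positivity
    rw [hβ s, ENNReal.ofReal_mul (by positivity), ENNReal.ofReal_mul (by positivity),
      ENNReal.ofReal_mul hC₁.le, ENNReal.ofReal_pow hC₂.le, hinner s]
  -- pweight combination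
  have hPW : ∀ s : ℕ →₀ ℕ,
      ENNReal.ofReal (pweight θ' lam s)
        * ENNReal.ofReal (∏ j ∈ s.support, ((s j : ℝ) ^ r)⁻¹)
      = ∏ j ∈ s.support, Φ (s j) := by
    intro s
    have hnn : ∀ j ∈ s.support, (0:ℝ) ≤ (1 + lam * (s j : ℝ)) ^ θ' := by
      intro j _
      have : (0:ℝ) ≤ lam * (s j : ℝ) := mul_nonneg hlam (Nat.cast_nonneg _)
      exact Real.rpow_nonneg (by linarith) _
    rw [pweight, ENNReal.ofReal_prod_of_nonneg hnn,
      ENNReal.ofReal_prod_of_nonneg (fun j _ => by positivity : ∀ j ∈ s.support, (0:ℝ) ≤ ((s j : ℝ) ^ r)⁻¹),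
      ← Finset.prod_mul_distrib]
    apply Finset.prod_congr rfl
    intro j hj
    rw [hΦdef, ← ENNReal.ofReal_mul (hnn j hj)]
  -- the double family
  set F : (ℕ →₀ ℕ) → (ℕ →₀ ℕ) → ℝ≥0∞ := fun s k =>
    if k.support = s.support ∧ ∀ j ∈ k.support, k j ≤ 2*r then
      (ENNReal.ofReal C₂ ^ s.support.card) ^ p * (∏ j ∈ s.support, Φ (s j)) ^ p
        * (MF Eb k) ^ p
    else 0 with hFdef
  have hstep : ∀ s : ℕ →₀ ℕ, ENNReal.ofReal ((pweight θ' lam s * β s) ^ p)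
      ≤ (ENNReal.ofReal C₁) ^ p * ∑' k : ℕ →₀ ℕ, F s k := by
    intro s
    rw [← ENNReal.ofReal_rpow_of_nonneg (mul_nonneg (hpwnn s) (hβnn s)) hp0.le,
      ENNReal.ofReal_mul (hpwnn s), hofβ s]
    have hre : ENNReal.ofReal (pweight θ' lam s)
        * (ENNReal.ofReal C₁ * ENNReal.ofReal C₂ ^ s.support.card
          * ENNReal.ofReal (∏ j ∈ s.support, ((s j : ℝ) ^ r)⁻¹)
          * ∑' k : ℕ →₀ ℕ, (if k.support = s.support ∧ ∀ j ∈ k.support, k j ≤ 2*r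
              then MF Eb k else 0))
        = ENNReal.ofReal C₁ * ((ENNReal.ofReal C₂ ^ s.support.card
            * ∏ j ∈ s.support, Φ (s j))
          * ∑' k : ℕ →₀ ℕ, (if k.support = s.support ∧ ∀ j ∈ k.support, k j ≤ 2*r
              then MF Eb k else 0)) := by
      rw [← hPW s]
      ring
    rw [hre, ENNReal.mul_rpow_of_nonneg _ _ hp0.le]
    apply mul_le_mul_right
    rw [ENNReal.mul_rpow_of_nonneg _ _ hp0.le, ENNReal.mul_rpow_of_nonneg _ _ hp0.le]
    calc (ENNReal.ofReal C₂ ^ s.support.card) ^ p * (∏ j ∈ s.support, Φ (s j)) ^ p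
          * (∑' k : ℕ →₀ ℕ, (if k.support = s.support ∧ ∀ j ∈ k.support, k j ≤ 2*r
              then MF Eb k else 0)) ^ p
        ≤ (ENNReal.ofReal C₂ ^ s.support.card) ^ p * (∏ j ∈ s.support, Φ (s j)) ^ p
          * ∑' k : ℕ →₀ ℕ, ((if k.support = s.support ∧ ∀ j ∈ k.support, k j ≤ 2*r
              then MF Eb k else 0)) ^ p :=
          mul_le_mul_right (rpow_tsum_le _ hp0 hp1) _
      _ = ∑' k : ℕ →₀ ℕ, F s k := by
          rw [← ENNReal.tsum_mul_left]
          apply tsum_congr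
          intro k
          simp only [hFdef]
          rw [ite_rpow _ hp0, mul_ite, mul_zero]
  -- per-k bound on the s-sum
  set MxM : ℝ≥0∞ := ENNReal.ofReal (max 1 (Cθlam * C₂ * Cpθ ^ (1/p))) with hMxMdef
  have hMxM1 : (1:ℝ≥0∞) ≤ MxM := by
    rw [hMxMdef, ← ENNReal.ofReal_one]
    exact ENNReal.ofReal_le_ofReal hmax1
  have hMxMp1 : (1:ℝ≥0∞) ≤ MxM ^ p := by
    rw [← ENNReal.one_rpow p]
    exact ENNReal.rpow_le_rpow hMxM1 hp0.le
  have hMFsplit : ∀ k, MF Kb k = MxM ^ deg k * MF Eb k := by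
    intro k
    rw [MF, MF]
    have h1 : Xp Kb k = Xp (fun j => MxM * Eb j) k := by
      apply Xp_congr
      intro j _
      show ENNReal.ofReal (K * b j) = MxM * ENNReal.ofReal (Real.exp 1 * b j)
      rw [hMxMdef, ← ENNReal.ofReal_mul hmax0.le]
      congr 1
      rw [hK]
      ring
    rw [h1, Xp_smul]
    ring
  have hfactor : (ENNReal.ofReal C₂) ^ p * ENNReal.ofReal (Cθlam ^ p * Cpθ) ≤ MxM ^ p := by
    rw [ENNReal.ofReal_rpow_of_nonneg hC₂.le hp0.le, ← ENNReal.ofReal_mul (by positivity),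
      hMxMdef, ENNReal.ofReal_rpow_of_nonneg (le_trans zero_le_one hmax1) hp0.le]
    apply ENNReal.ofReal_le_ofReal
    have hM₀0 : (0:ℝ) ≤ Cθlam * C₂ * Cpθ ^ (1/p) :=
      mul_nonneg (mul_nonneg hCθ0 hC₂.le) (Real.rpow_nonneg hCpθ0 _)
    have heq : C₂ ^ p * (Cθlam ^ p * Cpθ) = (Cθlam * C₂ * Cpθ ^ (1/p)) ^ p := by
      rw [Real.mul_rpow (mul_nonneg hCθ0 hC₂.le) (Real.rpow_nonneg hCpθ0 _),
        Real.mul_rpow hCθ0 hC₂.le, ← Real.rpow_mul hCpθ0,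
        one_div_mul_cancel hp0.ne', Real.rpow_one]
      ring
    rw [heq]
    exact Real.rpow_le_rpow hM₀0 (le_max_right 1 _) hp0.le
  have hper : ∀ k : ℕ →₀ ℕ, (∑' s : ℕ →₀ ℕ, F s k) ≤ (MF Kb k) ^ p := by
    intro k
    by_cases hQ : ∀ j ∈ k.support, k j ≤ 2*r
    · have hF : ∀ s : ℕ →₀ ℕ, F s k
          = (if s.support = k.support then ∏ j ∈ k.support, (Φ (s j)) ^ p else 0)
            * ((ENNReal.ofReal C₂ ^ k.support.card) ^ p * (MF Eb k) ^ p) := by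
        intro s
        simp only [hFdef]
        by_cases hsupp : k.support = s.support
        · rw [if_pos ⟨hsupp, hQ⟩, if_pos hsupp.symm, ← hsupp,
            ENNReal.prod_rpow_of_nonneg hp0.le]
          ring
        · rw [if_neg (by rintro ⟨h,_⟩; exact hsupp h), if_neg (fun h => hsupp h.symm),
            zero_mul]
      rw [tsum_congr hF, ENNReal.tsum_mul_right]
      have hD : (∑' s : ℕ →₀ ℕ, if s.support = k.support
            then ∏ j ∈ k.support, (Φ (s j)) ^ p else 0)
          ≤ (ENNReal.ofReal (Cθlam ^ p * Cpθ)) ^ k.support.card := by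
        refine le_trans (tsum_supp_eq_prod_le (fun n => (Φ n) ^ p) k.support) ?_
        exact Finset.prod_le_pow_card _ _ _ (fun j _ => hDsum)
      calc (∑' s : ℕ →₀ ℕ, if s.support = k.support
              then ∏ j ∈ k.support, (Φ (s j)) ^ p else 0)
            * ((ENNReal.ofReal C₂ ^ k.support.card) ^ p * (MF Eb k) ^ p)
          ≤ (ENNReal.ofReal (Cθlam ^ p * Cpθ)) ^ k.support.card
            * ((ENNReal.ofReal C₂ ^ k.support.card) ^ p * (MF Eb k) ^ p) :=
            mul_le_mul_left hD _
        _ = ((ENNReal.ofReal C₂) ^ p * ENNReal.ofReal (Cθlam ^ p * Cpθ)) ^ k.support.card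
            * (MF Eb k) ^ p := by
            rw [pow_rpow_comm, mul_pow]
            ring
        _ ≤ (MxM ^ p) ^ k.support.card * (MF Eb k) ^ p :=
            mul_le_mul_left (pow_le_pow_left' hfactor _) _
        _ ≤ (MxM ^ p) ^ deg k * (MF Eb k) ^ p :=
            mul_le_mul_left (pow_le_pow_right₀ hMxMp1 (card_le_deg k)) _
        _ = (MF Kb k) ^ p := by
            rw [hMFsplit k, ENNReal.mul_rpow_of_nonneg _ _ hp0.le, pow_rpow_comm]
    · have hzero : ∀ s, F s k = 0 := by
        intro s
        simp only [hFdef]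
        rw [if_neg (by rintro ⟨_, h⟩; exact hQ h)]
      rw [tsum_congr hzero, tsum_zero]
      exact zero_le
  -- main ENNReal inequality
  have hmain : ∑' s : ℕ →₀ ℕ, ENNReal.ofReal ((pweight θ' lam s * β s) ^ p)
      ≤ (ENNReal.ofReal C₁) ^ p * ∑' k : ℕ →₀ ℕ, (MF Kb k) ^ p := by
    calc ∑' s : ℕ →₀ ℕ, ENNReal.ofReal ((pweight θ' lam s * β s) ^ p)
        ≤ ∑' s : ℕ →₀ ℕ, (ENNReal.ofReal C₁) ^ p * ∑' k : ℕ →₀ ℕ, F s k :=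
          ENNReal.tsum_le_tsum hstep
      _ = (ENNReal.ofReal C₁) ^ p * ∑' (s : ℕ →₀ ℕ) (k : ℕ →₀ ℕ), F s k :=
          ENNReal.tsum_mul_left
      _ = (ENNReal.ofReal C₁) ^ p * ∑' (k : ℕ →₀ ℕ) (s : ℕ →₀ ℕ), F s k := by
          rw [ENNReal.tsum_comm]
      _ ≤ (ENNReal.ofReal C₁) ^ p * ∑' k : ℕ →₀ ℕ, (MF Kb k) ^ p :=
          mul_le_mul_right (ENNReal.tsum_le_tsum hper) _
  have hRHSne : (ENNReal.ofReal C₁) ^ p * ∑' k : ℕ →₀ ℕ, (MF Kb k) ^ p ≠ ⊤ :=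
    ENNReal.mul_ne_top (ENNReal.rpow_ne_top_of_nonneg hp0.le ENNReal.ofReal_ne_top) hA
  have hsum1 : Summable (fun s : ℕ →₀ ℕ => (pweight θ' lam s * β s) ^ p) := by
    have hne : ∑' s : ℕ →₀ ℕ, ENNReal.ofReal ((pweight θ' lam s * β s) ^ p) ≠ ⊤ :=
      ne_top_of_le_ne_top hRHSne hmain
    apply (ENNReal.summable_toReal hne).congr
    intro s
    rw [ENNReal.toReal_ofReal (Real.rpow_nonneg (mul_nonneg (hpwnn s) (hβnn s)) p)]
  refine ⟨hsum1, hsum2, ?_⟩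
  have h1 : ENNReal.ofReal (∑' s : ℕ →₀ ℕ, (pweight θ' lam s * β s) ^ p)
      = ∑' s : ℕ →₀ ℕ, ENNReal.ofReal ((pweight θ' lam s * β s) ^ p) :=
    ENNReal.ofReal_tsum_of_nonneg
      (fun s => Real.rpow_nonneg (mul_nonneg (hpwnn s) (hβnn s)) p) hsum1
  have h2 : (ENNReal.ofReal C₁) ^ p * ∑' k : ℕ →₀ ℕ, (MF Kb k) ^ p
      = ENNReal.ofReal (C₁ ^ p * ∑' k : ℕ →₀ ℕ, monomialFactor (fun j => K * b j) k ^ p) := by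
    rw [tsum_congr hMFKb_eq,
      ← ENNReal.ofReal_tsum_of_nonneg (fun k => Real.rpow_nonneg (hmonoKnn k) p) hsum2,
      ENNReal.ofReal_rpow_of_nonneg hC₁.le hp0.le,
      ← ENNReal.ofReal_mul (Real.rpow_nonneg hC₁.le p)]
  have hRHS0 : (0:ℝ) ≤ C₁ ^ p * ∑' k : ℕ →₀ ℕ, monomialFactor (fun j => K * b j) k ^ p :=
    mul_nonneg (Real.rpow_nonneg hC₁.le p)
      (tsum_nonneg fun k => Real.rpow_nonneg (hmonoKnn k) p)
  apply (ENNReal.ofReal_le_ofReal_iff hRHS0).1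
  rw [h1, ← h2]
  exact hmain
end
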